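/- arXiv:2307.08780 — 5 statements merged into one kernel-verified Lean document; each statement's English description precedes it below -/
import Mathlib

section
/- Let A and B be NMDAs over the same finite alphabet Σ. If A(u) = B(u) for every nonempty finite word u ∈ Σ⁺, then A(w) = B(w) for every infinite word w ∈ Σ^ω. -/
/-- A nondeterministic discounted-sum automaton with multiple discount factors (NMDA)
over an alphabet `α` with states `Q`: a set of initial states, a complete transition
relation, a rational weight and a rational discount factor (greater than one) on every
transition. -/
structure NMDA (α : Type) (Q : Type) where
  init : Set Q
  init_nonempty : init.Nonempty
  delta : Q → α → Q → Prop
  complete : ∀ q a, ∃ q', delta q a q'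
  weight : Q → α → Q → ℚ
  disc : Q → α → Q → ℚ
  disc_gt_one : ∀ q a q', delta q a q' → 1 < disc q a q'

namespace NMDA

variable {α Q : Type}

/-- `r` is a run of `A` on the finite word consisting of the first `n` letters of `w`. -/
def FinRun (A : NMDA α Q) (w : ℕ → α) (n : ℕ) (r : ℕ → Q) : Prop :=
  r 0 ∈ A.init ∧ ∀ i < n, A.delta (r i) (w i) (r (i + 1))

/-- `r` is a run of `A` on the infinite word `w`. -/
def InfRun (A : NMDA α Q) (w : ℕ → α) (r : ℕ → Q) : Prop :=
  r 0 ∈ A.init ∧ ∀ i, A.delta (r i) (w i) (r (i + 1))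

/-- The (discounted-sum) value of the length-`n` prefix of the run `r` on the word `w`. -/
noncomputable def runVal (A : NMDA α Q) (w : ℕ → α) (r : ℕ → Q) (n : ℕ) : ℝ :=
  ∑ i ∈ Finset.range n,
    (A.weight (r i) (w i) (r (i + 1)) : ℝ) *
      ∏ j ∈ Finset.range i, (1 / (A.disc (r j) (w j) (r (j + 1)) : ℝ))

/-- The (discounted-sum) value of the infinite run `r` on the infinite word `w`. -/
noncomputable def infRunVal (A : NMDA α Q) (w : ℕ → α) (r : ℕ → Q) : ℝ :=
  ∑' i : ℕ,
    (A.weight (r i) (w i) (r (i + 1)) : ℝ) *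
      ∏ j ∈ Finset.range i, (1 / (A.disc (r j) (w j) (r (j + 1)) : ℝ))

/-- The value of `A` on the finite word given by the first `n` letters of `w`:
the infimum of the values of its runs on that word. -/
noncomputable def finVal (A : NMDA α Q) (w : ℕ → α) (n : ℕ) : ℝ :=
  sInf { x : ℝ | ∃ r : ℕ → Q, A.FinRun w n r ∧ x = A.runVal w r n }

/-- The value of `A` on the infinite word `w`:
the infimum of the values of its runs on `w`. -/
noncomputable def infVal (A : NMDA α Q) (w : ℕ → α) : ℝ :=
  sInf { x : ℝ | ∃ r : ℕ → Q, A.InfRun w r ∧ x = A.infRunVal w r }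

/-- An NMDA is integral if all its discount factors are integers. -/
def Integral (A : NMDA α Q) : Prop :=
  ∀ q a q', A.delta q a q' → ∃ k : ℤ, A.disc q a q' = (k : ℚ)

/-- An NMDA is deterministic (a DMDA) if it has a single initial state and at most one
transition from every state over every letter. -/
def Deterministic (A : NMDA α Q) : Prop :=
  (∃ q₀ : Q, A.init = {q₀}) ∧
    ∀ q a q₁ q₂, A.delta q a q₁ → A.delta q a q₂ → q₁ = q₂

/-- A `l`-NDA: an NMDA whose discount factor is constantly `l` on all transitions. -/
def ConstDisc (A : NMDA α Q) (l : ℚ) : Prop :=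
  ∀ q a q', A.delta q a q' → A.disc q a q' = l

/-- `A` is tidy with the choice function `θ`: the discount factor of the last transition
of every run on every nonempty finite word `u` equals `θ u`. -/
def TidyWith (A : NMDA α Q) (θ : List α → ℕ) : Prop :=
  ∀ (w : ℕ → α) (n : ℕ) (r : ℕ → Q), A.FinRun w (n + 1) r →
    A.disc (r n) (w n) (r (n + 1)) = (θ (List.ofFn fun i : Fin (n + 1) => w i.val) : ℚ)

/-- A `θ`-NMDA: an integral NMDA that is tidy with the choice function `θ`. -/
def ThetaNMDA (A : NMDA α Q) (θ : List α → ℕ) : Prop :=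
  A.Integral ∧ A.TidyWith θ

end NMDA

open Filter Topology

namespace NMDAProof

variable {α Q : Type}

/-- Extend a finite run to an infinite run using completeness. -/
noncomputable def ext (A : NMDA α Q) (w : ℕ → α) (r : ℕ → Q) (n : ℕ) : ℕ → Q
  | 0 => r 0
  | i + 1 =>
    if i + 1 ≤ n then r (i + 1)
    else Classical.choose (A.complete (ext A w r n i) (w i))

lemma ext_eq (A : NMDA α Q) (w : ℕ → α) (r : ℕ → Q) (n : ℕ) :
    ∀ i, i ≤ n → ext A w r n i = r i := by
  intro i
  induction i with
  | zero => intro _; rfl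
  | succ i _ => intro h; simp [ext, h]

lemma ext_infRun (A : NMDA α Q) (w : ℕ → α) {r : ℕ → Q} {n : ℕ}
    (hr : A.FinRun w n r) : A.InfRun w (ext A w r n) := by
  refine ⟨?_, ?_⟩
  · have h0 : ext A w r n 0 = r 0 := rfl
    rw [h0]; exact hr.1
  · intro i
    by_cases h : i + 1 ≤ n
    · rw [ext_eq A w r n (i + 1) h, ext_eq A w r n i (Nat.le_of_succ_le h)]
      exact hr.2 i h
    · have h1 : ext A w r n (i + 1)
          = Classical.choose (A.complete (ext A w r n i) (w i)) := by
        simp [ext, h]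
      rw [h1]
      exact Classical.choose_spec (A.complete (ext A w r n i) (w i))

lemma runVal_congr (A : NMDA α Q) (w : ℕ → α) {r r' : ℕ → Q} {n : ℕ}
    (h : ∀ i, i ≤ n → r i = r' i) : A.runVal w r n = A.runVal w r' n := by
  unfold NMDA.runVal
  refine Finset.sum_congr rfl ?_
  intro i hi
  rw [Finset.mem_range] at hi
  rw [h i (le_of_lt hi), h (i + 1) hi]
  congr 1
  refine Finset.prod_congr rfl ?_
  intro j hj
  rw [Finset.mem_range] at hj
  rw [h j (by omega), h (j + 1) (by omega)]

/-- The `i`-th term of a discounted sum. -/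
noncomputable def term (A : NMDA α Q) (w : ℕ → α) (r : ℕ → Q) (i : ℕ) : ℝ :=
  (A.weight (r i) (w i) (r (i + 1)) : ℝ) *
    ∏ j ∈ Finset.range i, (1 / (A.disc (r j) (w j) (r (j + 1)) : ℝ))

lemma runVal_eq_sum (A : NMDA α Q) (w : ℕ → α) (r : ℕ → Q) (n : ℕ) :
    A.runVal w r n = ∑ i ∈ Finset.range n, term A w r i := rfl

lemma infRunVal_eq_tsum (A : NMDA α Q) (w : ℕ → α) (r : ℕ → Q) :
    A.infRunVal w r = ∑' i, term A w r i := rfl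

lemma term_bound (A : NMDA α Q) (w : ℕ → α) (r : ℕ → Q) {W t : ℝ} (i : ℕ)
    (hW0 : 0 ≤ W)
    (hW : ∀ q a q', |(A.weight q a q' : ℝ)| ≤ W)
    (ht : ∀ q a q', A.delta q a q' → 1 / (A.disc q a q' : ℝ) ≤ t)
    (hdelta : ∀ j, j < i → A.delta (r j) (w j) (r (j + 1))) :
    |term A w r i| ≤ W * t ^ i := by
  have hprod : |∏ j ∈ Finset.range i, (1 / (A.disc (r j) (w j) (r (j + 1)) : ℝ))|
      ≤ t ^ i := by
    rw [Finset.abs_prod]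
    have : ∀ j ∈ Finset.range i,
        |1 / (A.disc (r j) (w j) (r (j + 1)) : ℝ)| ≤ t := by
      intro j hj
      rw [Finset.mem_range] at hj
      have hd := A.disc_gt_one _ _ _ (hdelta j hj)
      have hd' : (1 : ℝ) < (A.disc (r j) (w j) (r (j + 1)) : ℝ) := by
        exact_mod_cast hd
      have hpos : 0 < 1 / (A.disc (r j) (w j) (r (j + 1)) : ℝ) :=
        by positivity
      rw [abs_of_pos hpos]
      exact ht _ _ _ (hdelta j hj)
    calc ∏ j ∈ Finset.range i, |1 / (A.disc (r j) (w j) (r (j + 1)) : ℝ)|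
        ≤ ∏ j ∈ Finset.range i, t :=
          Finset.prod_le_prod (fun j _ => abs_nonneg _) this
      _ = t ^ i := by rw [Finset.prod_const, Finset.card_range]
  have habs : |term A w r i|
      = |(A.weight (r i) (w i) (r (i + 1)) : ℝ)| *
        |∏ j ∈ Finset.range i, (1 / (A.disc (r j) (w j) (r (j + 1)) : ℝ))| :=
    abs_mul _ _
  rw [habs]
  exact mul_le_mul (hW _ _ _) hprod (abs_nonneg _) hW0

lemma geom_partial_bound {a : ℕ → ℝ} {W t : ℝ} (n : ℕ) (hW0 : 0 ≤ W)
    (ht0 : 0 ≤ t) (ht1 : t < 1)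
    (h : ∀ i, i < n → |a i| ≤ W * t ^ i) :
    |∑ i ∈ Finset.range n, a i| ≤ W / (1 - t) := by
  have hg : Summable (fun i : ℕ => W * t ^ i) :=
    (summable_geometric_of_lt_one ht0 ht1).mul_left W
  calc |∑ i ∈ Finset.range n, a i|
      ≤ ∑ i ∈ Finset.range n, |a i| := Finset.abs_sum_le_sum_abs _ _
    _ ≤ ∑ i ∈ Finset.range n, W * t ^ i := by
        refine Finset.sum_le_sum ?_
        intro i hi
        exact h i (Finset.mem_range.mp hi)
    _ ≤ ∑' i, W * t ^ i := by
        refine Summable.sum_le_tsum _ (fun i _ => by positivity) hg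
    _ = W * (1 - t)⁻¹ := by rw [tsum_mul_left, tsum_geometric_of_lt_one ht0 ht1]
    _ = W / (1 - t) := by rw [div_eq_mul_inv]

lemma geom_tail_bound {a : ℕ → ℝ} {W t : ℝ} (hW0 : 0 ≤ W) (ht0 : 0 ≤ t) (ht1 : t < 1)
    (h : ∀ i, |a i| ≤ W * t ^ i) :
    Summable a ∧
      ∀ n : ℕ, |(∑' i, a i) - ∑ i ∈ Finset.range n, a i| ≤ (W / (1 - t)) * t ^ n := by
  have hg : Summable (fun i : ℕ => W * t ^ i) :=
    (summable_geometric_of_lt_one ht0 ht1).mul_left W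
  have hsum : Summable a := Summable.of_norm_bounded hg (fun i => h i)
  refine ⟨hsum, fun n => ?_⟩
  have key := Summable.sum_add_tsum_nat_add n hsum
  have hdiff : (∑' i, a i) - ∑ i ∈ Finset.range n, a i = ∑' i, a (i + n) := by
    linarith
  rw [hdiff]
  have hshift : Summable (fun i => a (i + n)) :=
    (summable_nat_add_iff n).mpr hsum
  have hnormsum : Summable (fun i => ‖a (i + n)‖) := by
    refine Summable.of_norm_bounded ((summable_nat_add_iff n).mpr hg) ?_
    intro i
    simpa using h (i + n)
  calc |∑' i, a (i + n)| ≤ ∑' i, ‖a (i + n)‖ := norm_tsum_le_tsum_norm hnormsum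
    _ ≤ ∑' i, W * t ^ (i + n) := by
        refine Summable.tsum_le_tsum ?_ hnormsum ((summable_nat_add_iff n).mpr hg)
        intro i
        simpa using h (i + n)
    _ = (W * t ^ n) * ∑' i, t ^ i := by
        rw [← tsum_mul_left]
        congr 1
        funext i
        rw [pow_add]; ring
    _ = (W / (1 - t)) * t ^ n := by
        rw [tsum_geometric_of_lt_one ht0 ht1, div_eq_mul_inv]; ring

lemma exists_bounds (A : NMDA α Q) [Fintype α] [Fintype Q] (w : ℕ → α) :
    ∃ W t : ℝ, 0 ≤ W ∧ 0 ≤ t ∧ t < 1 ∧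
      (∀ q a q', |(A.weight q a q' : ℝ)| ≤ W) ∧
      (∀ q a q', A.delta q a q' → 1 / (A.disc q a q' : ℝ) ≤ t) := by
  obtain ⟨q₀, _⟩ := A.init_nonempty
  haveI : Nonempty Q := ⟨q₀⟩
  haveI : Nonempty α := ⟨w 0⟩
  haveI : Nonempty (Q × α × Q) := inferInstance
  set f : Q × α × Q → ℝ := fun p => |(A.weight p.1 p.2.1 p.2.2 : ℝ)| with hf
  set W : ℝ := Finset.univ.sup' Finset.univ_nonempty f with hWdef
  have hW : ∀ q a q', |(A.weight q a q' : ℝ)| ≤ W := fun q a q' =>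
    Finset.le_sup' f (Finset.mem_univ (q, a, q'))
  have hW0 : 0 ≤ W := le_trans (abs_nonneg _) (hW q₀ (w 0) q₀)
  set g : Q × α × Q → ℚ := fun p =>
    if 1 < A.disc p.1 p.2.1 p.2.2 then A.disc p.1 p.2.1 p.2.2 else 2 with hg
  set d : ℚ := Finset.univ.inf' Finset.univ_nonempty g with hddef
  have hd1 : 1 < d := by
    rw [hddef, Finset.lt_inf'_iff]
    intro p _
    by_cases hp : 1 < A.disc p.1 p.2.1 p.2.2 <;> simp [hg, hp]
  have hd1' : (1 : ℝ) < (d : ℝ) := by exact_mod_cast hd1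
  refine ⟨W, 1 / (d : ℝ), hW0, by positivity, ?_, hW, ?_⟩
  · rw [div_lt_one (by linarith)]; exact hd1'
  · intro q a q' hq
    have hgd : d ≤ g (q, a, q') := Finset.inf'_le g (Finset.mem_univ _)
    have hdisc : 1 < A.disc q a q' := A.disc_gt_one q a q' hq
    have hgd' : d ≤ A.disc q a q' := by simpa [hg, hdisc] using hgd
    have hgd'' : (d : ℝ) ≤ (A.disc q a q' : ℝ) := by exact_mod_cast hgd'
    exact one_div_le_one_div_of_le (by linarith) hgd''

lemma tendsto_finVal (A : NMDA α Q) [Fintype α] [Fintype Q] (w : ℕ → α) :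
    Tendsto (fun n => A.finVal w n) atTop (𝓝 (A.infVal w)) := by
  obtain ⟨W, t, hW0, ht0, ht1, hW, ht⟩ := exists_bounds A w
  set C : ℝ := W / (1 - t) with hCdef
  have hC0 : 0 ≤ C := by
    apply div_nonneg hW0; linarith
  -- bounds for finite runs
  have hFinBound : ∀ n r, A.FinRun w n r → |A.runVal w r n| ≤ C := by
    intro n r hr
    rw [runVal_eq_sum]
    exact geom_partial_bound n hW0 ht0 ht1
      (fun i hi => term_bound A w r i hW0 hW ht
        (fun j hj => hr.2 j (lt_of_lt_of_le hj (le_of_lt hi))))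
  -- tail bounds for infinite runs
  have hInfBound : ∀ r, A.InfRun w r →
      Summable (term A w r) ∧
        ∀ n, |A.infRunVal w r - A.runVal w r n| ≤ C * t ^ n := by
    intro r hr
    have := geom_tail_bound hW0 ht0 ht1
      (fun i => term_bound A w r i hW0 hW ht (fun j _ => hr.2 j))
    exact ⟨this.1, fun n => by
      rw [infRunVal_eq_tsum, runVal_eq_sum]; exact this.2 n⟩
  have hInfAbs : ∀ r, A.InfRun w r → |A.infRunVal w r| ≤ C := by
    intro r hr
    have := (hInfBound r hr).2 0
    simpa [NMDA.runVal] using this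
  -- existence of an infinite run
  obtain ⟨q₀, hq₀⟩ := A.init_nonempty
  have hFinEx : ∀ n, A.FinRun w n (fun _ => q₀) → True := fun _ _ => trivial
  have hrun0 : A.FinRun w 0 (fun _ => q₀) := ⟨hq₀, fun i hi => absurd hi (Nat.not_lt_zero i)⟩
  have hInfEx : ∃ r, A.InfRun w r := ⟨_, ext_infRun A w hrun0⟩
  -- set nonemptiness and boundedness
  have hSIne : { x : ℝ | ∃ r, A.InfRun w r ∧ x = A.infRunVal w r }.Nonempty := by
    obtain ⟨r, hr⟩ := hInfEx
    exact ⟨A.infRunVal w r, r, hr, rfl⟩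
  have hSIbdd : BddBelow { x : ℝ | ∃ r, A.InfRun w r ∧ x = A.infRunVal w r } := by
    refine ⟨-C, ?_⟩
    rintro x ⟨r, hr, rfl⟩
    have := hInfAbs r hr
    have := abs_le.mp this
    linarith [this.1]
  have hSFne : ∀ n, { x : ℝ | ∃ r, A.FinRun w n r ∧ x = A.runVal w r n }.Nonempty := by
    intro n
    obtain ⟨r, hr⟩ := hInfEx
    have : A.FinRun w n r := ⟨hr.1, fun i _ => hr.2 i⟩
    exact ⟨A.runVal w r n, r, this, rfl⟩
  have hSFbdd : ∀ n, BddBelow { x : ℝ | ∃ r, A.FinRun w n r ∧ x = A.runVal w r n } := by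
    intro n
    refine ⟨-C, ?_⟩
    rintro x ⟨r, hr, rfl⟩
    have := abs_le.mp (hFinBound n r hr)
    linarith [this.1]
  -- infVal ≤ finVal n + C t^n
  have hle1 : ∀ n, A.infVal w ≤ A.finVal w n + C * t ^ n := by
    intro n
    have : A.infVal w - C * t ^ n ≤ A.finVal w n := by
      apply le_csInf (hSFne n)
      rintro x ⟨r, hr, rfl⟩
      set r' := ext A w r n with hr'def
      have hr' : A.InfRun w r' := ext_infRun A w hr
      have heq : A.runVal w r' n = A.runVal w r n :=
        runVal_congr A w (fun i hi => ext_eq A w r n i hi)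
      have h1 : A.infVal w ≤ A.infRunVal w r' :=
        csInf_le hSIbdd ⟨r', hr', rfl⟩
      have h2 := abs_le.mp ((hInfBound r' hr').2 n)
      rw [heq] at h2
      linarith [h2.1, h2.2]
    linarith
  -- finVal n ≤ infVal + C t^n
  have hle2 : ∀ n, A.finVal w n ≤ A.infVal w + C * t ^ n := by
    intro n
    have : A.finVal w n - C * t ^ n ≤ A.infVal w := by
      apply le_csInf hSIne
      rintro x ⟨r, hr, rfl⟩
      have hfr : A.FinRun w n r := ⟨hr.1, fun i _ => hr.2 i⟩
      have h1 : A.finVal w n ≤ A.runVal w r n :=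
        csInf_le (hSFbdd n) ⟨r, hfr, rfl⟩
      have h2 := abs_le.mp ((hInfBound r hr).2 n)
      linarith [h2.1, h2.2]
    linarith
  -- squeeze
  have hdiff : ∀ n, |A.finVal w n - A.infVal w| ≤ C * t ^ n := by
    intro n
    rw [abs_le]
    constructor <;> [linarith [hle1 n]; linarith [hle2 n]]
  have htend0 : Tendsto (fun n : ℕ => C * t ^ n) atTop (𝓝 0) := by
    have := tendsto_pow_atTop_nhds_zero_of_lt_one ht0 ht1
    simpa using this.const_mul C
  have : Tendsto (fun n => A.finVal w n - A.infVal w) atTop (𝓝 0) :=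
    squeeze_zero_norm (fun n => by simpa using hdiff n) htend0
  have := this.add_const (A.infVal w)
  simpa using this

end NMDAProof


/-- If two NMDAs over the same alphabet agree on all nonempty finite words,
then they agree on all infinite words. -/
theorem nmda_finite_agreement_implies_infinite_agreement
    {α QA QB : Type} [Fintype α] [Fintype QA] [Fintype QB]
    (A : NMDA α QA) (B : NMDA α QB)
    (h : ∀ (w : ℕ → α) (n : ℕ), 0 < n → A.finVal w n = B.finVal w n) :
    ∀ w : ℕ → α, A.infVal w = B.infVal w := by
  intro w
  have hA := NMDAProof.tendsto_finVal A w
  have hB := NMDAProof.tendsto_finVal B w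
  have hEq : (fun n => A.finVal w n) =ᶠ[Filter.atTop] fun n => B.finVal w n :=
    Filter.eventually_atTop.mpr ⟨1, fun n hn => h w n hn⟩
  exact tendsto_nhds_unique (hA.congr' hEq) hB
end

section
/- There exists an integral NMDA B (over a three-letter alphabet) such that no integral DMDA is equivalent to B with respect to infinite words, and no integral DMDA is equivalent to B with respect to nonempty finite words. -/
namespace NDetProof

open Finset

def aword : ℕ → Fin 3 := fun _ => 0

lemma aword_eq (i : ℕ) : aword i = 0 := rfl

def Wword (t : ℕ) (v : ℕ → Fin 3) : ℕ → Fin 3 := fun i => if i < t then 0 else v (i - t)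

lemma Wword_lt {t i : ℕ} (v : ℕ → Fin 3) (h : i < t) : Wword t v i = 0 := if_pos h

lemma Wword_add (t : ℕ) (v : ℕ → Fin 3) (j : ℕ) : Wword t v (t + j) = v j := by
  unfold Wword
  rw [if_neg (by omega)]
  congr 1
  omega

lemma Wword_aword (t : ℕ) : Wword t aword = aword := by
  funext i
  unfold Wword aword
  split <;> rfl

def myB : NMDA (Fin 3) (Fin 2) where
  init := Set.univ
  init_nonempty := ⟨0, trivial⟩
  delta := fun q _ q' => q' = q
  complete := fun q _ => ⟨q, rfl⟩
  weight := fun q a _ =>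
    if q = 0 then (if a = 1 then 1 else 0) else (if a = 1 then 2 else if a = 2 then 1 else 0)
  disc := fun q _ _ => if q = 0 then 2 else 3
  disc_gt_one := by
    intro q a q' _
    split <;> norm_num

lemma myB_weight (q : Fin 2) (a : Fin 3) (q' : Fin 2) :
    myB.weight q a q' =
      if q = 0 then (if a = 1 then 1 else 0)
      else (if a = 1 then 2 else if a = 2 then 1 else 0) := rfl

lemma myB_disc (q : Fin 2) (a : Fin 3) (q' : Fin 2) :
    myB.disc q a q' = if q = 0 then 2 else 3 := rfl

lemma myB_delta (q : Fin 2) (a : Fin 3) (q' : Fin 2) :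
    myB.delta q a q' ↔ q' = q := Iff.rfl

lemma myB_integral : myB.Integral := by
  intro q a q' _
  by_cases h : q = 0
  · exact ⟨2, by rw [myB_disc, if_pos h]; norm_num⟩
  · exact ⟨3, by rw [myB_disc, if_neg h]; norm_num⟩

lemma fin2_cases (x : Fin 2) : x = 0 ∨ x = 1 := by
  fin_cases x
  · exact Or.inl rfl
  · exact Or.inr rfl

noncomputable def PB (w : ℕ → Fin 3) (n : ℕ) : ℝ :=
  ∑ i ∈ range n, (if w i = 1 then (1:ℝ) else 0) * (1/2)^i

noncomputable def QB (w : ℕ → Fin 3) (n : ℕ) : ℝ :=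
  ∑ i ∈ range n, (if w i = 1 then (2:ℝ) else if w i = 2 then 1 else 0) * (1/3)^i

noncomputable def PBi (w : ℕ → Fin 3) : ℝ :=
  ∑' i, (if w i = 1 then (1:ℝ) else 0) * (1/2)^i

noncomputable def QBi (w : ℕ → Fin 3) : ℝ :=
  ∑' i, (if w i = 1 then (2:ℝ) else if w i = 2 then 1 else 0) * (1/3)^i

lemma summable_bd (c : ℕ → ℝ) (M x : ℝ) (h0 : 0 ≤ x) (h1 : x < 1)
    (hc : ∀ i, |c i| ≤ M) : Summable fun i => c i * x ^ i := by
  apply Summable.of_norm_bounded (g := fun i => M * x ^ i)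
    ((summable_geometric_of_lt_one h0 h1).mul_left M)
  intro i
  rw [Real.norm_eq_abs, abs_mul, abs_pow, abs_of_nonneg h0]
  exact mul_le_mul_of_nonneg_right (hc i) (pow_nonneg h0 i)

lemma summable_PB (w : ℕ → Fin 3) : Summable fun i => (if w i = 1 then (1:ℝ) else 0) * (1/2)^i :=
  summable_bd _ 1 _ (by norm_num) (by norm_num) (fun i => by split <;> simp)

lemma summable_QB (w : ℕ → Fin 3) :
    Summable fun i => (if w i = 1 then (2:ℝ) else if w i = 2 then 1 else 0) * (1/3)^i :=
  summable_bd _ 2 _ (by norm_num) (by norm_num)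
    (fun i => by split
                 · simp
                 · split <;> simp <;> norm_num)

end NDetProof
namespace NDetProof
open Finset

lemma myB_run_const {w : ℕ → Fin 3} {r : ℕ → Fin 2}
    (h : ∀ i, myB.delta (r i) (w i) (r (i+1))) : ∀ i, r i = r 0 := by
  intro i
  induction i with
  | zero => rfl
  | succ k ih => exact (h k).trans ih

lemma myB_runVal_eq {w : ℕ → Fin 3} {r : ℕ → Fin 2} (q : Fin 2)
    (h : ∀ i, r i = q) (n : ℕ) :
    myB.runVal w r n = if q = 0 then PB w n else QB w n := by
  unfold NMDA.runVal
  by_cases hq : q = 0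
  · rw [if_pos hq]
    unfold PB
    refine Finset.sum_congr rfl fun i _ => ?_
    have e1 : (myB.weight (r i) (w i) (r (i+1)) : ℝ) = if w i = 1 then 1 else 0 := by
      rw [h i, h (i+1), hq, myB_weight, if_pos rfl]
      split <;> norm_num
    have e2 : ∏ j ∈ range i, (1 / ((myB.disc (r j) (w j) (r (j+1)):ℚ):ℝ)) = ((1:ℝ)/2)^i := by
      calc ∏ j ∈ range i, (1 / ((myB.disc (r j) (w j) (r (j+1)):ℚ):ℝ))
          = ∏ _j ∈ range i, ((1:ℝ)/2) :=
            Finset.prod_congr rfl fun j _ => by rw [h j, hq, myB_disc, if_pos rfl]; norm_num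
        _ = ((1:ℝ)/2)^i := by rw [prod_const, card_range]
    rw [e1, e2]
  · rw [if_neg hq]
    have hq1 : q = 1 := (fin2_cases q).resolve_left hq
    unfold QB
    refine Finset.sum_congr rfl fun i _ => ?_
    have e1 : (myB.weight (r i) (w i) (r (i+1)) : ℝ) =
        if w i = 1 then 2 else if w i = 2 then 1 else 0 := by
      rw [h i, h (i+1), hq1, myB_weight, if_neg (by norm_num)]
      split
      · norm_num
      · split <;> norm_num
    have e2 : ∏ j ∈ range i, (1 / ((myB.disc (r j) (w j) (r (j+1)):ℚ):ℝ)) = ((1:ℝ)/3)^i := by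
      calc ∏ j ∈ range i, (1 / ((myB.disc (r j) (w j) (r (j+1)):ℚ):ℝ))
          = ∏ _j ∈ range i, ((1:ℝ)/3) :=
            Finset.prod_congr rfl fun j _ => by rw [h j, hq1, myB_disc, if_neg (by norm_num)]; norm_num
        _ = ((1:ℝ)/3)^i := by rw [prod_const, card_range]
    rw [e1, e2]

lemma myB_finVal (w : ℕ → Fin 3) (n : ℕ) : myB.finVal w n = (PB w n) ⊓ (QB w n) := by
  have hset : {x : ℝ | ∃ r, myB.FinRun w n r ∧ x = myB.runVal w r n} = {PB w n, QB w n} := by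
    ext x
    simp only [Set.mem_setOf_eq, Set.mem_insert_iff, Set.mem_singleton_iff]
    constructor
    · rintro ⟨r, ⟨_, hr⟩, rfl⟩
      -- build a total run agreeing with r below n
      set r' : ℕ → Fin 2 := fun i => r (min i n) with hr'
      have hconst : ∀ i, r' i = r' 0 := by
        refine myB_run_const (w := w) fun i => ?_
        show r' (i+1) = r' i
        by_cases hi : i < n
        · have e1 : min (i+1) n = i + 1 := by omega
          have e2 : min i n = i := by omega
          rw [hr']
          simp only
          rw [e1, e2]
          exact hr i hi
        · have e1 : min (i+1) n = n := by omega
          have e2 : min i n = n := by omega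
          rw [hr']
          simp only
          rw [e1, e2]
      have hval : myB.runVal w r n = myB.runVal w r' n := by
        unfold NMDA.runVal
        refine Finset.sum_congr rfl fun i hi => ?_
        rw [mem_range] at hi
        have e0 : r' i = r i := by rw [hr']; simp only; rw [min_eq_left (by omega : i ≤ n)]
        have e1 : r' (i+1) = r (i+1) := by
          rw [hr']; simp only; rw [min_eq_left (by omega : i + 1 ≤ n)]
        rw [e0, e1]
        congr 1
        refine Finset.prod_congr rfl fun j hj => ?_
        rw [mem_range] at hj
        have f0 : r' j = r j := by rw [hr']; simp only; rw [min_eq_left (by omega : j ≤ n)]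
        have f1 : r' (j+1) = r (j+1) := by
          rw [hr']; simp only; rw [min_eq_left (by omega : j + 1 ≤ n)]
        rw [f0, f1]
      have hc : ∀ i, r' i = r' 0 := hconst
      rcases fin2_cases (r' 0) with h0 | h0
      · left
        rw [hval, myB_runVal_eq 0 (fun i => (hc i).trans h0) n, if_pos rfl]
      · right
        rw [hval, myB_runVal_eq 1 (fun i => (hc i).trans h0) n, if_neg (by norm_num)]
    · rintro (rfl | rfl)
      · exact ⟨fun _ => 0, ⟨trivial, fun i _ => rfl⟩,
          by rw [myB_runVal_eq 0 (fun _ => rfl) n, if_pos rfl]⟩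
      · exact ⟨fun _ => 1, ⟨trivial, fun i _ => rfl⟩,
          by rw [myB_runVal_eq 1 (fun _ => rfl) n, if_neg (by norm_num)]⟩
  rw [NMDA.finVal, hset, csInf_pair]

lemma myB_infRunVal_eq {w : ℕ → Fin 3} {r : ℕ → Fin 2} (q : Fin 2)
    (h : ∀ i, r i = q) :
    myB.infRunVal w r = if q = 0 then PBi w else QBi w := by
  unfold NMDA.infRunVal
  by_cases hq : q = 0
  · rw [if_pos hq]
    unfold PBi
    refine tsum_congr fun i => ?_
    have e1 : (myB.weight (r i) (w i) (r (i+1)) : ℝ) = if w i = 1 then 1 else 0 := by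
      rw [h i, h (i+1), hq, myB_weight, if_pos rfl]
      split <;> norm_num
    have e2 : ∏ j ∈ range i, (1 / ((myB.disc (r j) (w j) (r (j+1)):ℚ):ℝ)) = ((1:ℝ)/2)^i := by
      calc ∏ j ∈ range i, (1 / ((myB.disc (r j) (w j) (r (j+1)):ℚ):ℝ))
          = ∏ _j ∈ range i, ((1:ℝ)/2) :=
            Finset.prod_congr rfl fun j _ => by rw [h j, hq, myB_disc, if_pos rfl]; norm_num
        _ = ((1:ℝ)/2)^i := by rw [prod_const, card_range]
    rw [e1, e2]
  · rw [if_neg hq]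
    have hq1 : q = 1 := (fin2_cases q).resolve_left hq
    unfold QBi
    refine tsum_congr fun i => ?_
    have e1 : (myB.weight (r i) (w i) (r (i+1)) : ℝ) =
        if w i = 1 then 2 else if w i = 2 then 1 else 0 := by
      rw [h i, h (i+1), hq1, myB_weight, if_neg (by norm_num)]
      split
      · norm_num
      · split <;> norm_num
    have e2 : ∏ j ∈ range i, (1 / ((myB.disc (r j) (w j) (r (j+1)):ℚ):ℝ)) = ((1:ℝ)/3)^i := by
      calc ∏ j ∈ range i, (1 / ((myB.disc (r j) (w j) (r (j+1)):ℚ):ℝ))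
          = ∏ _j ∈ range i, ((1:ℝ)/3) :=
            Finset.prod_congr rfl fun j _ => by rw [h j, hq1, myB_disc, if_neg (by norm_num)]; norm_num
        _ = ((1:ℝ)/3)^i := by rw [prod_const, card_range]
    rw [e1, e2]

lemma myB_infVal (w : ℕ → Fin 3) : myB.infVal w = (PBi w) ⊓ (QBi w) := by
  have hset : {x : ℝ | ∃ r, myB.InfRun w r ∧ x = myB.infRunVal w r} = {PBi w, QBi w} := by
    ext x
    simp only [Set.mem_setOf_eq, Set.mem_insert_iff, Set.mem_singleton_iff]
    constructor
    · rintro ⟨r, ⟨_, hr⟩, rfl⟩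
      have hc : ∀ i, r i = r 0 := myB_run_const hr
      rcases fin2_cases (r 0) with h0 | h0
      · left
        rw [myB_infRunVal_eq 0 (fun i => (hc i).trans h0), if_pos rfl]
      · right
        rw [myB_infRunVal_eq 1 (fun i => (hc i).trans h0), if_neg (by norm_num)]
    · rintro (rfl | rfl)
      · exact ⟨fun _ => 0, ⟨trivial, fun _ => rfl⟩,
          by rw [myB_infRunVal_eq 0 (fun _ => rfl), if_pos rfl]⟩
      · exact ⟨fun _ => 1, ⟨trivial, fun _ => rfl⟩,
          by rw [myB_infRunVal_eq 1 (fun _ => rfl), if_neg (by norm_num)]⟩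
  rw [NMDA.infVal, hset, csInf_pair]

end NDetProof
namespace NDetProof
open Finset

lemma PB_shift (t k : ℕ) (v : ℕ → Fin 3) : PB (Wword t v) (t + k) = (1/2)^t * PB v k := by
  unfold PB
  rw [Finset.sum_range_add]
  have h1 : ∑ i ∈ range t, (if Wword t v i = 1 then (1:ℝ) else 0) * (1/2)^i = 0 :=
    Finset.sum_eq_zero fun i hi => by
      rw [Wword_lt v (mem_range.1 hi)]; norm_num [Fin.ext_iff]
  rw [h1, zero_add, Finset.mul_sum]
  refine Finset.sum_congr rfl fun j _ => ?_
  rw [Wword_add, pow_add]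
  ring

lemma QB_shift (t k : ℕ) (v : ℕ → Fin 3) : QB (Wword t v) (t + k) = (1/3)^t * QB v k := by
  unfold QB
  rw [Finset.sum_range_add]
  have h1 : ∑ i ∈ range t,
      (if Wword t v i = 1 then (2:ℝ) else if Wword t v i = 2 then 1 else 0) * (1/3)^i = 0 :=
    Finset.sum_eq_zero fun i hi => by
      rw [Wword_lt v (mem_range.1 hi)]; norm_num [Fin.ext_iff]
  rw [h1, zero_add, Finset.mul_sum]
  refine Finset.sum_congr rfl fun j _ => ?_
  rw [Wword_add, pow_add]
  ring

lemma PBi_shift (t : ℕ) (v : ℕ → Fin 3) : PBi (Wword t v) = (1/2)^t * PBi v := by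
  unfold PBi
  rw [← Summable.sum_add_tsum_nat_add t (summable_PB (Wword t v))]
  have h1 : ∑ i ∈ range t, (if Wword t v i = 1 then (1:ℝ) else 0) * (1/2)^i = 0 :=
    Finset.sum_eq_zero fun i hi => by
      rw [Wword_lt v (mem_range.1 hi)]; norm_num [Fin.ext_iff]
  rw [h1, zero_add, ← tsum_mul_left]
  refine tsum_congr fun j => ?_
  rw [show j + t = t + j from by omega, Wword_add, pow_add]
  ring

lemma QBi_shift (t : ℕ) (v : ℕ → Fin 3) : QBi (Wword t v) = (1/3)^t * QBi v := by
  unfold QBi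
  rw [← Summable.sum_add_tsum_nat_add t (summable_QB (Wword t v))]
  have h1 : ∑ i ∈ range t,
      (if Wword t v i = 1 then (2:ℝ) else if Wword t v i = 2 then 1 else 0) * (1/3)^i = 0 :=
    Finset.sum_eq_zero fun i hi => by
      rw [Wword_lt v (mem_range.1 hi)]; norm_num [Fin.ext_iff]
  rw [h1, zero_add, ← tsum_mul_left]
  refine tsum_congr fun j => ?_
  rw [show j + t = t + j from by omega, Wword_add, pow_add]
  ring

/-- the finite test word `c^K b` -/
def v1f (K : ℕ) : ℕ → Fin 3 := fun i => if i = K then 1 else 2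

/-- the infinite test word `c^K b a^ω` -/
def v1i (K : ℕ) : ℕ → Fin 3 := fun i => if i = K then 1 else if i < K then 2 else 0

/-- the test word `b a^ω` -/
def v2w : ℕ → Fin 3 := fun i => if i = 0 then 1 else 0

lemma PB_aword (n : ℕ) : PB aword n = 0 :=
  Finset.sum_eq_zero fun i _ => by simp [aword]

lemma QB_aword (n : ℕ) : QB aword n = 0 :=
  Finset.sum_eq_zero fun i _ => by simp [aword]

lemma PBi_aword : PBi aword = 0 := by
  unfold PBi
  rw [tsum_congr (fun i => by simp [aword] : ∀ i, (if aword i = 1 then (1:ℝ) else 0) * (1/2)^i = 0)]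
  exact tsum_zero

lemma QBi_aword : QBi aword = 0 := by
  unfold QBi
  rw [tsum_congr (fun i => by simp [aword] :
      ∀ i, (if aword i = 1 then (2:ℝ) else if aword i = 2 then 1 else 0) * (1/3)^i = 0)]
  exact tsum_zero

lemma PB_v1f (K : ℕ) : PB (v1f K) (K + 1) = (1/2)^K := by
  unfold PB
  rw [Finset.sum_eq_single_of_mem K (Finset.self_mem_range_succ K)
    (fun i _ hne => by rw [show v1f K i = 2 from if_neg hne]; norm_num [Fin.ext_iff])]
  rw [show v1f K K = 1 from if_pos rfl]
  norm_num

lemma QB_v1f_ge (K : ℕ) (hK : 0 < K) : 1 ≤ QB (v1f K) (K + 1) := by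
  unfold QB
  have h0 : (if v1f K 0 = 1 then (2:ℝ) else if v1f K 0 = 2 then 1 else 0) * (1/3)^0 = 1 := by
    rw [show v1f K 0 = 2 from if_neg (by omega)]
    norm_num [Fin.ext_iff]
  calc (1:ℝ) = (if v1f K 0 = 1 then (2:ℝ) else if v1f K 0 = 2 then 1 else 0) * (1/3)^0 := h0.symm
    _ ≤ _ := Finset.single_le_sum
        (f := fun i => (if v1f K i = 1 then (2:ℝ) else if v1f K i = 2 then 1 else 0) * (1/3)^i)
        (fun i _ => by positivity) (Finset.mem_range.2 (by omega))

lemma PB_v2w : PB v2w 1 = 1 := by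
  unfold PB v2w
  rw [Finset.sum_range_one]
  norm_num

lemma QB_v2w : QB v2w 1 = 2 := by
  unfold QB v2w
  rw [Finset.sum_range_one]
  norm_num

lemma PBi_v1i (K : ℕ) : PBi (v1i K) = (1/2)^K := by
  unfold PBi
  rw [tsum_eq_sum (s := {K}) (fun b hb => by
    rw [show v1i K b = if b < K then 2 else 0 from if_neg (by simpa using hb)]
    split <;> norm_num [Fin.ext_iff])]
  rw [Finset.sum_singleton, show v1i K K = 1 from if_pos rfl]
  norm_num

lemma QBi_v1i_ge (K : ℕ) (hK : 0 < K) : 1 ≤ QBi (v1i K) := by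
  unfold QBi
  have h0 : (if v1i K 0 = 1 then (2:ℝ) else if v1i K 0 = 2 then 1 else 0) * (1/3)^0 = 1 := by
    rw [show v1i K 0 = 2 from by unfold v1i; rw [if_neg (by omega), if_pos hK]]
    norm_num [Fin.ext_iff]
  calc (1:ℝ) = _ := h0.symm
    _ ≤ _ := Summable.le_tsum (summable_QB (v1i K)) 0 (fun j _ => by positivity)

lemma PBi_v2w : PBi v2w = 1 := by
  unfold PBi
  rw [tsum_eq_sum (s := {0}) (fun b hb => by
    rw [show v2w b = 0 from if_neg (by simpa using hb)]
    norm_num [Fin.ext_iff])]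
  rw [Finset.sum_singleton, show v2w 0 = 1 from if_pos rfl]
  norm_num

lemma QBi_v2w : QBi v2w = 2 := by
  unfold QBi
  rw [tsum_eq_sum (s := {0}) (fun b hb => by
    rw [show v2w b = 0 from if_neg (by simpa using hb)]
    norm_num [Fin.ext_iff])]
  rw [Finset.sum_singleton, show v2w 0 = 1 from if_pos rfl]
  norm_num

lemma ineqL {t n : ℕ} (h : t ≤ n) {Y : ℝ} (hY : 1 ≤ Y) :
    (1/2:ℝ)^t * (1/2)^n ≤ (1/3)^t * Y := by
  have h1 : (1/2:ℝ)^n ≤ (1/2)^t := pow_le_pow_of_le_one (by norm_num) (by norm_num) h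
  have h2 : (1/2:ℝ)^t * (1/2)^t ≤ (1/3)^t := by
    rw [← mul_pow]
    apply pow_le_pow_left₀ (by norm_num) (by norm_num)
  calc (1/2:ℝ)^t * (1/2)^n ≤ (1/2)^t * (1/2)^t := by
        apply mul_le_mul_of_nonneg_left h1 (by positivity)
    _ ≤ (1/3)^t := h2
    _ = (1/3)^t * 1 := (mul_one _).symm
    _ ≤ (1/3)^t * Y := mul_le_mul_of_nonneg_left hY (by positivity)

lemma ineqR {t : ℕ} (h : 2 ≤ t) : (1/3:ℝ)^t * 2 ≤ (1/2)^t * 1 := by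
  obtain ⟨s, rfl⟩ : ∃ s, t = 2 + s := ⟨t - 2, by omega⟩
  rw [pow_add, pow_add]
  have h1 : (1/3:ℝ)^s ≤ (1/2)^s := pow_le_pow_left₀ (by norm_num) (by norm_num) s
  have h2 : (0:ℝ) ≤ (1/3)^s := by positivity
  nlinarith

lemma final_contra {m n : ℕ} (hmn : m < n)
    {Cm Cn dm dn s0 s1 s2 : ℝ}
    (e0m : Cm + dm * s0 = 0) (e1m : Cm + dm * s1 = (1/2)^m * (1/2)^n)
    (e2m : Cm + dm * s2 = (1/3)^m * 2)
    (e0n : Cn + dn * s0 = 0) (e1n : Cn + dn * s1 = (1/2)^n * (1/2)^n)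
    (e2n : Cn + dn * s2 = (1/3)^n * 2) : False := by
  have h1 : dm * s1 - dm * s0 = (1/2:ℝ)^m * (1/2)^n := by linarith
  have h2 : dn * s1 - dn * s0 = (1/2:ℝ)^n * (1/2)^n := by linarith
  have h3 : dm * s2 - dm * s0 = (1/3:ℝ)^m * 2 := by linarith
  have h4 : dn * s2 - dn * s0 = (1/3:ℝ)^n * 2 := by linarith
  have key : ((1/2:ℝ)^m * (1/2)^n) * ((1/3)^n * 2) = ((1/2)^n * (1/2)^n) * ((1/3)^m * 2) := by
    rw [← h1, ← h2, ← h3, ← h4]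
    ring
  obtain ⟨e, rfl⟩ : ∃ e, n = m + (e + 1) := ⟨n - m - 1, by omega⟩
  have hpos : (2 * ((1/2:ℝ))^(2*m+e+1) * ((1/3))^m) ≠ 0 := by positivity
  have key3 : (2 * ((1/2:ℝ))^(2*m+e+1) * ((1/3))^m) * ((1/3)^(e+1)) =
      (2 * ((1/2:ℝ))^(2*m+e+1) * ((1/3))^m) * ((1/2)^(e+1)) := by
    calc (2 * ((1/2:ℝ))^(2*m+e+1) * ((1/3))^m) * ((1/3)^(e+1))
        = ((1/2)^m * (1/2)^(m+(e+1))) * ((1/3)^(m+(e+1)) * 2) := by ring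
      _ = ((1/2)^(m+(e+1)) * (1/2)^(m+(e+1))) * ((1/3)^m * 2) := key
      _ = _ := by ring
  have hcan := mul_left_cancel₀ hpos key3
  have hlt : ((1/3:ℝ))^(e+1) < ((1/2))^(e+1) :=
    pow_lt_pow_left₀ (by norm_num) (by norm_num) (Nat.succ_ne_zero e)
  linarith

end NDetProof
namespace NDetProof
open Finset

section Dside

variable {Q : Type} (D : NMDA (Fin 3) Q)

noncomputable def nx (q : Q) (a : Fin 3) : Q := (D.complete q a).choose

lemma nx_delta (q : Q) (a : Fin 3) : D.delta q a (nx D q a) := (D.complete q a).choose_spec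

noncomputable def dRun (q0 : Q) (w : ℕ → Fin 3) : ℕ → Q
  | 0 => q0
  | n + 1 => nx D (dRun q0 w n) (w n)

lemma dRun_zero (q0 : Q) (w : ℕ → Fin 3) : dRun D q0 w 0 = q0 := rfl

lemma dRun_succ (q0 : Q) (w : ℕ → Fin 3) (n : ℕ) :
    dRun D q0 w (n + 1) = nx D (dRun D q0 w n) (w n) := rfl

lemma dRun_delta (q0 : Q) (w : ℕ → Fin 3) (i : ℕ) :
    D.delta (dRun D q0 w i) (w i) (dRun D q0 w (i + 1)) := nx_delta D _ _

lemma run_eq_dRun (hdet : D.Deterministic) {q0 : Q} (hq0 : D.init = {q0})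
    {w : ℕ → Fin 3} {n : ℕ} {r : ℕ → Q} (hr : D.FinRun w n r) :
    ∀ i ≤ n, r i = dRun D q0 w i := by
  intro i hi
  induction i with
  | zero =>
    have h := hr.1
    rw [hq0] at h
    exact h
  | succ k ih =>
    have hk := hr.2 k (by omega)
    rw [ih (by omega)] at hk
    exact hdet.2 _ _ _ _ hk (dRun_delta D q0 w k)

lemma infRun_eq_dRun (hdet : D.Deterministic) {q0 : Q} (hq0 : D.init = {q0})
    {w : ℕ → Fin 3} {r : ℕ → Q} (hr : D.InfRun w r) :
    ∀ i, r i = dRun D q0 w i := fun i =>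
  run_eq_dRun D hdet hq0 (n := i) ⟨hr.1, fun j _ => hr.2 j⟩ i le_rfl

lemma runVal_congr_run {w : ℕ → Fin 3} {r r' : ℕ → Q} {n : ℕ}
    (h : ∀ i ≤ n, r i = r' i) : D.runVal w r n = D.runVal w r' n := by
  unfold NMDA.runVal
  refine Finset.sum_congr rfl fun i hi => ?_
  rw [mem_range] at hi
  rw [h i (by omega), h (i+1) (by omega)]
  congr 1
  refine Finset.prod_congr rfl fun j hj => ?_
  rw [mem_range] at hj
  rw [h j (by omega), h (j+1) (by omega)]

lemma finVal_dRun (hdet : D.Deterministic) {q0 : Q} (hq0 : D.init = {q0})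
    (w : ℕ → Fin 3) (n : ℕ) :
    D.finVal w n = D.runVal w (dRun D q0 w) n := by
  have hset : {x : ℝ | ∃ r, D.FinRun w n r ∧ x = D.runVal w r n}
      = {D.runVal w (dRun D q0 w) n} := by
    ext x
    simp only [Set.mem_setOf_eq, Set.mem_singleton_iff]
    constructor
    · rintro ⟨r, hr, rfl⟩
      exact runVal_congr_run D (run_eq_dRun D hdet hq0 hr)
    · rintro rfl
      exact ⟨dRun D q0 w, ⟨by rw [hq0]; rfl, fun i _ => dRun_delta D q0 w i⟩, rfl⟩
  rw [NMDA.finVal, hset, csInf_singleton]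

lemma infVal_dRun (hdet : D.Deterministic) {q0 : Q} (hq0 : D.init = {q0})
    (w : ℕ → Fin 3) :
    D.infVal w = D.infRunVal w (dRun D q0 w) := by
  have hset : {x : ℝ | ∃ r, D.InfRun w r ∧ x = D.infRunVal w r}
      = {D.infRunVal w (dRun D q0 w)} := by
    ext x
    simp only [Set.mem_setOf_eq, Set.mem_singleton_iff]
    constructor
    · rintro ⟨r, hr, rfl⟩
      have h := infRun_eq_dRun D hdet hq0 hr
      unfold NMDA.infRunVal
      refine tsum_congr fun i => ?_
      rw [h i, h (i+1)]
      congr 1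
      refine Finset.prod_congr rfl fun j _ => ?_
      rw [h j, h (j+1)]
    · rintro rfl
      exact ⟨dRun D q0 w, ⟨by rw [hq0]; rfl, fun i => dRun_delta D q0 w i⟩, rfl⟩
  rw [NMDA.infVal, hset, csInf_singleton]

lemma dRun_congr {q0 : Q} {w w' : ℕ → Fin 3} {n : ℕ} (h : ∀ i < n, w i = w' i) :
    ∀ i ≤ n, dRun D q0 w i = dRun D q0 w' i := by
  intro i hi
  induction i with
  | zero => rfl
  | succ k ih => rw [dRun_succ, dRun_succ, ih (by omega), h k (by omega)]

lemma dRun_shift (q0 : Q) (t : ℕ) (v : ℕ → Fin 3) (j : ℕ) :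
    dRun D q0 (Wword t v) (t + j) = dRun D (dRun D q0 aword t) v j := by
  induction j with
  | zero =>
    exact dRun_congr D (fun i hi => (Wword_lt v hi).trans (aword_eq i).symm) t le_rfl
  | succ k ih =>
    rw [show t + (k + 1) = (t + k) + 1 from rfl, dRun_succ, ih, Wword_add, dRun_succ]

noncomputable def Cval (q0 : Q) (t : ℕ) : ℝ := D.runVal aword (dRun D q0 aword) t

noncomputable def dfac (q0 : Q) (t : ℕ) : ℝ :=
  ∏ j ∈ range t, (1 / ((D.disc (dRun D q0 aword j) (aword j) (dRun D q0 aword (j+1)) : ℚ) : ℝ))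

lemma prefix_sum (q0 : Q) (t : ℕ) (v : ℕ → Fin 3) :
    ∑ i ∈ range t,
      (D.weight (dRun D q0 (Wword t v) i) (Wword t v i) (dRun D q0 (Wword t v) (i+1)) : ℝ) *
        ∏ j ∈ range i,
          (1 / ((D.disc (dRun D q0 (Wword t v) j) (Wword t v j) (dRun D q0 (Wword t v) (j+1)) : ℚ) : ℝ))
      = Cval D q0 t := by
  unfold Cval NMDA.runVal
  refine Finset.sum_congr rfl fun i hi => ?_
  rw [mem_range] at hi
  have hc : ∀ l ≤ t, dRun D q0 (Wword t v) l = dRun D q0 aword l :=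
    dRun_congr D (fun l hl => (Wword_lt v hl).trans (aword_eq l).symm)
  rw [hc i (by omega), hc (i+1) (by omega), Wword_lt v hi, ← aword_eq i]
  congr 1
  refine Finset.prod_congr rfl fun j hj => ?_
  rw [mem_range] at hj
  rw [hc j (by omega), hc (j+1) (by omega), Wword_lt v (by omega), ← aword_eq j]

lemma term_shift (q0 : Q) (t : ℕ) (v : ℕ → Fin 3) (j : ℕ) :
    (D.weight (dRun D q0 (Wword t v) (t+j)) (Wword t v (t+j)) (dRun D q0 (Wword t v) (t+j+1)) : ℝ) *
        ∏ l ∈ range (t+j),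
          (1 / ((D.disc (dRun D q0 (Wword t v) l) (Wword t v l) (dRun D q0 (Wword t v) (l+1)) : ℚ) : ℝ))
      = dfac D q0 t *
        ((D.weight (dRun D (dRun D q0 aword t) v j) (v j) (dRun D (dRun D q0 aword t) v (j+1)) : ℝ) *
          ∏ l ∈ range j,
            (1 / ((D.disc (dRun D (dRun D q0 aword t) v l) (v l) (dRun D (dRun D q0 aword t) v (l+1)) : ℚ) : ℝ)) ) := by
  have hc : ∀ l ≤ t, dRun D q0 (Wword t v) l = dRun D q0 aword l :=
    dRun_congr D (fun l hl => (Wword_lt v hl).trans (aword_eq l).symm)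
  rw [Finset.prod_range_add]
  have e1 : ∏ l ∈ range t,
      (1 / ((D.disc (dRun D q0 (Wword t v) l) (Wword t v l) (dRun D q0 (Wword t v) (l+1)) : ℚ) : ℝ))
      = dfac D q0 t := by
    unfold dfac
    refine Finset.prod_congr rfl fun l hl => ?_
    rw [mem_range] at hl
    rw [hc l (by omega), hc (l+1) (by omega), Wword_lt v hl, ← aword_eq l]
  have e2 : ∏ l ∈ range j,
      (1 / ((D.disc (dRun D q0 (Wword t v) (t+l)) (Wword t v (t+l)) (dRun D q0 (Wword t v) (t+l+1)) : ℚ) : ℝ))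
      = ∏ l ∈ range j,
      (1 / ((D.disc (dRun D (dRun D q0 aword t) v l) (v l) (dRun D (dRun D q0 aword t) v (l+1)) : ℚ) : ℝ)) := by
    refine Finset.prod_congr rfl fun l _ => ?_
    rw [show t + l + 1 = t + (l + 1) from rfl, dRun_shift, dRun_shift, Wword_add]
  rw [e1, e2, show t + j + 1 = t + (j + 1) from rfl, dRun_shift, dRun_shift, Wword_add]
  ring

lemma decomp_fin (q0 : Q) (t k : ℕ) (v : ℕ → Fin 3) :
    D.runVal (Wword t v) (dRun D q0 (Wword t v)) (t + k)
      = Cval D q0 t + dfac D q0 t * D.runVal v (dRun D (dRun D q0 aword t) v) k := by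
  unfold NMDA.runVal
  rw [Finset.sum_range_add]
  congr 1
  · exact prefix_sum D q0 t v
  · rw [Finset.mul_sum]
    exact Finset.sum_congr rfl fun j _ => term_shift D q0 t v j

lemma disc_ge_two (hint : D.Integral) {q : Q} {a : Fin 3} {q' : Q} (h : D.delta q a q') :
    (2 : ℚ) ≤ D.disc q a q' := by
  obtain ⟨kk, hk⟩ := hint q a q' h
  have h1 : (1 : ℚ) < D.disc q a q' := D.disc_gt_one q a q' h
  rw [hk] at h1 ⊢
  have : (1 : ℤ) < kk := by exact_mod_cast h1
  exact_mod_cast this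

lemma summable_run [Fintype Q] [Nonempty Q] (hint : D.Integral) {w : ℕ → Fin 3} {r : ℕ → Q}
    (hr : ∀ i, D.delta (r i) (w i) (r (i+1))) :
    Summable fun i => (D.weight (r i) (w i) (r (i+1)) : ℝ) *
      ∏ j ∈ range i, (1 / ((D.disc (r j) (w j) (r (j+1)) : ℚ) : ℝ)) := by
  set M : ℝ := ∑ x : Q × Fin 3 × Q, |((D.weight x.1 x.2.1 x.2.2 : ℚ) : ℝ)| with hM
  have hMb : ∀ (q : Q) (a : Fin 3) (q' : Q), |((D.weight q a q' : ℚ) : ℝ)| ≤ M := by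
    intro q a q'
    exact Finset.single_le_sum
      (f := fun x : Q × Fin 3 × Q => |((D.weight x.1 x.2.1 x.2.2 : ℚ) : ℝ)|)
      (fun x _ => abs_nonneg _) (Finset.mem_univ (q, a, q'))
  apply Summable.of_norm_bounded (g := fun i => M * (1/2)^i)
    ((summable_geometric_of_lt_one (by norm_num) (by norm_num)).mul_left M)
  intro i
  rw [Real.norm_eq_abs, abs_mul]
  have hd : ∀ j, (2:ℝ) ≤ ((D.disc (r j) (w j) (r (j+1)) : ℚ) : ℝ) := by
    intro j
    exact_mod_cast disc_ge_two D hint (hr j)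
  have hnn : ∀ j, (0:ℝ) ≤ 1 / ((D.disc (r j) (w j) (r (j+1)) : ℚ) : ℝ) := by
    intro j
    have := hd j
    positivity
  have hprod : |∏ j ∈ range i, (1 / ((D.disc (r j) (w j) (r (j+1)) : ℚ) : ℝ))| ≤ (1/2)^i := by
    rw [abs_of_nonneg (Finset.prod_nonneg fun j _ => hnn j)]
    calc ∏ j ∈ range i, (1 / ((D.disc (r j) (w j) (r (j+1)) : ℚ) : ℝ))
        ≤ ∏ _j ∈ range i, ((1:ℝ)/2) := by
          refine Finset.prod_le_prod (fun j _ => hnn j) (fun j _ => ?_)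
          rw [div_le_div_iff₀ (by have := hd j; linarith) (by norm_num)]
          have := hd j
          linarith
      _ = (1/2)^i := by rw [prod_const, card_range]
  have h0M : (0:ℝ) ≤ M := le_trans (abs_nonneg _) (hMb (r i) (w i) (r (i+1)))
  exact mul_le_mul (hMb _ _ _) hprod (abs_nonneg _) h0M

lemma decomp_inf [Fintype Q] [Nonempty Q] (hint : D.Integral) (q0 : Q) (t : ℕ) (v : ℕ → Fin 3) :
    D.infRunVal (Wword t v) (dRun D q0 (Wword t v))
      = Cval D q0 t + dfac D q0 t * D.infRunVal v (dRun D (dRun D q0 aword t) v) := by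
  unfold NMDA.infRunVal
  have hsum : Summable fun i => (D.weight (dRun D q0 (Wword t v) i) (Wword t v i) (dRun D q0 (Wword t v) (i+1)) : ℝ) *
      ∏ j ∈ range i, (1 / ((D.disc (dRun D q0 (Wword t v) j) (Wword t v j) (dRun D q0 (Wword t v) (j+1)) : ℚ) : ℝ)) :=
    summable_run D hint (fun i => dRun_delta D q0 (Wword t v) i)
  rw [← Summable.sum_add_tsum_nat_add t hsum, prefix_sum D q0 t v]
  congr 1
  rw [← tsum_mul_left]
  refine tsum_congr fun j => ?_
  rw [show ∀ x, x + t = t + x from fun x => by omega]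
  exact term_shift D q0 t v j

end Dside
end NDetProof
open NDetProof in
/-- There exists an integral NMDA over a three-letter alphabet that no integral DMDA
(deterministic integral NMDA) is equivalent to, with respect to infinite words and
with respect to nonempty finite words. -/
theorem integral_nmda_not_determinizable :
    ∃ (Q : Type) (_ : Fintype Q) (B : NMDA (Fin 3) Q),
      B.Integral ∧
        ∀ (Q' : Type) (_ : Fintype Q') (D : NMDA (Fin 3) Q'),
          D.Integral → D.Deterministic →
            (¬ ∀ w : ℕ → Fin 3, D.infVal w = B.infVal w) ∧
              ¬ ∀ (w : ℕ → Fin 3) (n : ℕ), 0 < n → D.finVal w n = B.finVal w n := by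
  refine ⟨Fin 2, inferInstance, myB, myB_integral, ?_⟩
  intro Q' hQ' D hint hdet
  haveI := hQ'
  obtain ⟨q0, hq0⟩ := hdet.1
  haveI : Nonempty Q' := ⟨q0⟩
  obtain ⟨x, y, hxy, hfxy⟩ :=
    Finite.exists_ne_map_eq_of_infinite (fun i : ℕ => dRun D q0 aword (i + 2))
  obtain ⟨m, n, h2m, hmn, hqeq⟩ :
      ∃ m n, 2 ≤ m ∧ m < n ∧ dRun D q0 aword m = dRun D q0 aword n := by
    rcases Nat.lt_or_ge x y with h | h
    · exact ⟨x + 2, y + 2, by omega, by omega, hfxy⟩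
    · exact ⟨y + 2, x + 2, by omega, by omega, hfxy.symm⟩
  set qs := dRun D q0 aword m with hqs
  have hqtm : dRun D q0 aword m = qs := rfl
  have hqtn : dRun D q0 aword n = qs := hqeq.symm
  constructor
  · -- infinite words
    intro heq
    have eqs : ∀ t, 2 ≤ t → t ≤ n → dRun D q0 aword t = qs →
        (Cval D q0 t + dfac D q0 t * D.infRunVal aword (dRun D qs aword) = 0) ∧
        (Cval D q0 t + dfac D q0 t * D.infRunVal (v1i n) (dRun D qs (v1i n))
            = (1/2)^t * (1/2)^n) ∧
        (Cval D q0 t + dfac D q0 t * D.infRunVal v2w (dRun D qs v2w) = (1/3)^t * 2) := by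
      intro t ht2 htn hqt
      refine ⟨?_, ?_, ?_⟩
      · have h0 := heq aword
        have hdec := decomp_inf D hint q0 t aword
        rw [Wword_aword] at hdec
        rw [hqt] at hdec
        rw [infVal_dRun D hdet hq0, hdec, myB_infVal, PBi_aword, QBi_aword, inf_idem] at h0
        exact h0
      · have h1 := heq (Wword t (v1i n))
        rw [infVal_dRun D hdet hq0, decomp_inf D hint q0 t (v1i n), hqt, myB_infVal,
          PBi_shift, QBi_shift, PBi_v1i,
          inf_eq_left.mpr (ineqL htn (QBi_v1i_ge n (by omega)))] at h1
        exact h1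
      · have h2 := heq (Wword t v2w)
        rw [infVal_dRun D hdet hq0, decomp_inf D hint q0 t v2w, hqt, myB_infVal,
          PBi_shift, QBi_shift, PBi_v2w, QBi_v2w,
          inf_eq_right.mpr (ineqR ht2)] at h2
        exact h2
    obtain ⟨e0m, e1m, e2m⟩ := eqs m h2m (by omega) hqtm
    obtain ⟨e0n, e1n, e2n⟩ := eqs n (by omega) le_rfl hqtn
    exact final_contra hmn e0m e1m e2m e0n e1n e2n
  · -- finite words
    intro heq
    have eqs : ∀ t, 2 ≤ t → t ≤ n → dRun D q0 aword t = qs →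
        (Cval D q0 t + dfac D q0 t * D.runVal aword (dRun D qs aword) 1 = 0) ∧
        (Cval D q0 t + dfac D q0 t * D.runVal (v1f n) (dRun D qs (v1f n)) (n + 1)
            = (1/2)^t * (1/2)^n) ∧
        (Cval D q0 t + dfac D q0 t * D.runVal v2w (dRun D qs v2w) 1 = (1/3)^t * 2) := by
      intro t ht2 htn hqt
      refine ⟨?_, ?_, ?_⟩
      · have h0 := heq aword (t + 1) (by omega)
        have hdec := decomp_fin D q0 t 1 aword
        rw [Wword_aword] at hdec
        rw [hqt] at hdec
        rw [finVal_dRun D hdet hq0, hdec, myB_finVal, PB_aword, QB_aword, inf_idem] at h0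
        exact h0
      · have h1 := heq (Wword t (v1f n)) (t + (n + 1)) (by omega)
        rw [finVal_dRun D hdet hq0, decomp_fin D q0 t (n + 1) (v1f n), hqt, myB_finVal,
          PB_shift, QB_shift, PB_v1f,
          inf_eq_left.mpr (ineqL htn (QB_v1f_ge n (by omega)))] at h1
        exact h1
      · have h2 := heq (Wword t v2w) (t + 1) (by omega)
        rw [finVal_dRun D hdet hq0, decomp_fin D q0 t 1 v2w, hqt, myB_finVal,
          PB_shift, QB_shift, PB_v2w, QB_v2w,
          inf_eq_right.mpr (ineqR ht2)] at h2
        exact h2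
    obtain ⟨e0m, e1m, e2m⟩ := eqs m h2m (by omega) hqtm
    obtain ⟨e0n, e1n, e2n⟩ := eqs n (by omega) le_rfl hqtn
    exact final_contra hmn e0m e1m e2m e0n e1n e2n
end

section
/- For every nonzero rational number c, there are only finitely many natural numbers n such that c · 2^(n+1) · 3^(n+1) / (2^(n+1) + 3^(n+1)) is an integer. -/
/-- For every nonzero rational `c`, there are only finitely many natural numbers `n`
such that `c · 2^(n+1) · 3^(n+1) / (2^(n+1) + 3^(n+1))` is an integer. -/
theorem finitely_many_integral_quotients (c : ℚ) (hc : c ≠ 0) :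
    {n : ℕ | ∃ k : ℤ,
        c * 2 ^ (n + 1) * 3 ^ (n + 1) / (2 ^ (n + 1) + 3 ^ (n + 1)) = (k : ℚ)}.Finite := by
  apply Set.Finite.subset (Set.finite_Iio c.num.natAbs)
  intro n hn
  obtain ⟨k, hk⟩ := hn
  set m := n + 1 with hm
  have hS : (0:ℚ) < 2 ^ m + 3 ^ m := by positivity
  rw [div_eq_iff hS.ne'] at hk
  have hden : ((c.den : ℚ)) ≠ 0 := by
    exact_mod_cast c.den_ne_zero
  have hnum : (c.den : ℚ) * c = c.num := by
    exact Rat.den_mul_eq_num c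
  have key : (c.num : ℚ) * 2 ^ m * 3 ^ m = (k : ℚ) * c.den * (2 ^ m + 3 ^ m) := by
    calc (c.num : ℚ) * 2 ^ m * 3 ^ m = (c.den : ℚ) * (c * 2 ^ m * 3 ^ m) := by
            rw [← hnum]; ring
      _ = (c.den : ℚ) * ((k : ℚ) * (2 ^ m + 3 ^ m)) := by rw [hk]
      _ = (k : ℚ) * c.den * (2 ^ m + 3 ^ m) := by ring
  have keyZ : c.num * 2 ^ m * 3 ^ m = k * (c.den : ℤ) * (2 ^ m + 3 ^ m) := by
    exact_mod_cast key
  -- S = 2^m + 3^m divides c.num * (2^m * 3^m)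
  set S : ℕ := 2 ^ m + 3 ^ m with hSdef
  have hdvd : (S : ℤ) ∣ c.num * ((2 ^ m * 3 ^ m : ℕ) : ℤ) := by
    refine ⟨k * c.den, ?_⟩
    rw [hSdef]
    push_cast
    linarith [keyZ]
  -- coprimality in ℕ
  have hm0 : m ≠ 0 := by omega
  have hodd : Odd S := by
    have h2 : Even (2 ^ m : ℕ) := (Nat.even_pow).mpr ⟨even_two, hm0⟩
    have h3 : Odd (3 ^ m : ℕ) := Odd.pow ⟨1, by norm_num⟩
    exact h2.add_odd h3
  have hcop2 : Nat.Coprime S 2 := by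
    rw [Nat.coprime_comm]
    rw [Nat.Prime.coprime_iff_not_dvd Nat.prime_two]
    intro h
    exact (Nat.not_even_iff_odd.mpr hodd) (even_iff_two_dvd.mpr h)
  have hcop3 : Nat.Coprime S 3 := by
    rw [Nat.coprime_comm]
    rw [Nat.Prime.coprime_iff_not_dvd Nat.prime_three]
    intro h
    have h3 : (3 : ℕ) ∣ 3 ^ m := dvd_pow_self 3 hm0
    have h' : (3 : ℕ) ∣ 3 ^ m + 2 ^ m := by rwa [hSdef, Nat.add_comm] at h
    have h2 : (3 : ℕ) ∣ 2 ^ m := (Nat.dvd_add_right h3).mp h'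
    have := Nat.Prime.dvd_of_dvd_pow Nat.prime_three h2
    norm_num at this
  have hcopT : Nat.Coprime S (2 ^ m * 3 ^ m) :=
    Nat.Coprime.mul_right (hcop2.pow_right m) (hcop3.pow_right m)
  have hcopZ : IsCoprime (S : ℤ) ((2 ^ m * 3 ^ m : ℕ) : ℤ) := by
    rw [Int.isCoprime_iff_gcd_eq_one, Int.gcd_natCast_natCast]
    exact hcopT
  have hdvdnum : (S : ℤ) ∣ c.num := hcopZ.dvd_of_dvd_mul_right hdvd
  have hnum0 : c.num ≠ 0 := Rat.num_ne_zero.mpr hc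
  have hdvdnatAbs : S ∣ c.num.natAbs := by
    have := Int.natAbs_dvd_natAbs.mpr hdvdnum
    simpa using this
  have hle : S ≤ c.num.natAbs :=
    Nat.le_of_dvd (Int.natAbs_pos.mpr hnum0) hdvdnatAbs
  have hlt : m < 2 ^ m := Nat.lt_two_pow_self
  have : m ≤ S := by
    have : 2 ^ m ≤ S := Nat.le_add_right _ _
    omega
  simp only [Set.mem_Iio]
  omega
end

section
/- There exist deterministic integral NDAs A (with discount factor 2) and B (with discount factor 3) over the same finite alphabet such that: (1) no integral NMDA C satisfies C(w) = max(A(w), B(w)) for every word w, and (2) no integral NMDA C satisfies C(w) = A(w) + B(w) for every word w; this holds both when words range over nonempty finite words and when they range over infinite words. -/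
namespace NMDA
variable {α Q : Type}

lemma runVal_succ (A : NMDA α Q) (w : ℕ → α) (r : ℕ → Q) (n : ℕ) :
    A.runVal w r (n+1) = A.runVal w r n +
      (A.weight (r n) (w n) (r (n+1)) : ℝ) *
        ∏ j ∈ Finset.range n, (1 / (A.disc (r j) (w j) (r (j+1)) : ℝ)) :=
  Finset.sum_range_succ _ _

lemma runVal_congr (A : NMDA α Q) {w w' : ℕ → α} {r r' : ℕ → Q} {n : ℕ}
    (hw : ∀ i < n, w i = w' i) (hr : ∀ i ≤ n, r i = r' i) :
    A.runVal w r n = A.runVal w' r' n := by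
  unfold runVal
  refine Finset.sum_congr rfl fun i hi => ?_
  simp only [Finset.mem_range] at hi
  rw [hw i hi, hr i (by omega), hr (i+1) (by omega)]
  congr 1
  refine Finset.prod_congr rfl fun j hj => ?_
  simp only [Finset.mem_range] at hj
  rw [hw j (by omega), hr j (by omega), hr (j+1) (by omega)]

noncomputable def someRunFrom (A : NMDA α Q) (w : ℕ → α) (q : Q) : ℕ → Q
  | 0 => q
  | (n+1) => (A.complete (A.someRunFrom w q n) (w n)).choose

lemma someRunFrom_step (A : NMDA α Q) (w : ℕ → α) (q : Q) (n : ℕ) :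
    A.delta (A.someRunFrom w q n) (w n) (A.someRunFrom w q (n+1)) :=
  (A.complete (A.someRunFrom w q n) (w n)).choose_spec

noncomputable def someRun (A : NMDA α Q) (w : ℕ → α) : ℕ → Q :=
  A.someRunFrom w A.init_nonempty.choose

lemma someRun_infRun (A : NMDA α Q) (w : ℕ → α) : A.InfRun w (A.someRun w) :=
  ⟨A.init_nonempty.choose_spec, fun i => A.someRunFrom_step w _ i⟩

lemma someRun_finRun (A : NMDA α Q) (w : ℕ → α) (n : ℕ) : A.FinRun w n (A.someRun w) :=
  ⟨A.init_nonempty.choose_spec, fun i _ => A.someRunFrom_step w _ i⟩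

lemma finValSet_finite [Fintype Q] (A : NMDA α Q) (w : ℕ → α) (n : ℕ) :
    {x : ℝ | ∃ r : ℕ → Q, A.FinRun w n r ∧ x = A.runVal w r n}.Finite := by
  apply Set.Finite.subset (Set.finite_range
    (fun v : Fin (n+1) → Q => A.runVal w (fun i => v ⟨min i n, by omega⟩) n))
  rintro x ⟨r, _, rfl⟩
  exact ⟨fun i => r i.val, A.runVal_congr (fun _ _ => rfl)
    (fun i hi => by simp [Nat.min_eq_left hi])⟩

lemma finValSet_nonempty (A : NMDA α Q) (w : ℕ → α) (n : ℕ) :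
    {x : ℝ | ∃ r : ℕ → Q, A.FinRun w n r ∧ x = A.runVal w r n}.Nonempty :=
  ⟨A.runVal w (A.someRun w) n, A.someRun w, A.someRun_finRun w n, rfl⟩

lemma finVal_exists_min [Fintype Q] (A : NMDA α Q) (w : ℕ → α) (n : ℕ) :
    ∃ r : ℕ → Q, A.FinRun w n r ∧ A.finVal w n = A.runVal w r n :=
  (A.finValSet_nonempty w n).csInf_mem (A.finValSet_finite w n)

lemma finVal_le [Fintype Q] (A : NMDA α Q) {w : ℕ → α} {n : ℕ} {r : ℕ → Q}
    (h : A.FinRun w n r) : A.finVal w n ≤ A.runVal w r n :=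
  csInf_le (A.finValSet_finite w n).bddBelow ⟨r, h, rfl⟩

end NMDA

namespace NMDA
variable {α Q : Type}

/-- Deterministic NMDA from a transition function. -/
def ofFun (f : Q → α → Q) (wt : Q → α → Q → ℚ) (q0 : Q) (d : ℚ) (hd : 1 < d) :
    NMDA α Q where
  init := {q0}
  init_nonempty := ⟨q0, rfl⟩
  delta q a q' := q' = f q a
  complete q a := ⟨f q a, rfl⟩
  weight := wt
  disc _ _ _ := d
  disc_gt_one _ _ _ _ := hd

def detRun (f : Q → α → Q) (q0 : Q) (w : ℕ → α) : ℕ → Q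
  | 0 => q0
  | (n+1) => f (detRun f q0 w n) (w n)

variable {f : Q → α → Q} {wt : Q → α → Q → ℚ} {q0 : Q} {d : ℚ} {hd : 1 < d}

lemma ofFun_deterministic : (ofFun f wt q0 d hd).Deterministic :=
  ⟨⟨q0, rfl⟩, fun q a q₁ q₂ h1 h2 => h1.trans h2.symm⟩

lemma ofFun_constDisc : (ofFun f wt q0 d hd).ConstDisc d := fun _ _ _ _ => rfl

lemma ofFun_finRun_detRun (w : ℕ → α) (n : ℕ) :
    (ofFun f wt q0 d hd).FinRun w n (detRun f q0 w) :=
  ⟨rfl, fun _ _ => rfl⟩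

lemma ofFun_infRun_detRun (w : ℕ → α) :
    (ofFun f wt q0 d hd).InfRun w (detRun f q0 w) :=
  ⟨rfl, fun _ => rfl⟩

lemma ofFun_run_eq {w : ℕ → α} {n : ℕ} {r : ℕ → Q}
    (h : (ofFun f wt q0 d hd).FinRun w n r) : ∀ i ≤ n, r i = detRun f q0 w i := by
  intro i hi
  induction i with
  | zero => exact h.1
  | succ k ih =>
      have hk := h.2 k (by omega)
      rw [hk, ih (by omega)]
      rfl

lemma ofFun_inf_run_eq {w : ℕ → α} {r : ℕ → Q}
    (h : (ofFun f wt q0 d hd).InfRun w r) : ∀ i, r i = detRun f q0 w i := by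
  intro i
  induction i with
  | zero => exact h.1
  | succ k ih => rw [h.2 k, ih]; rfl

lemma ofFun_finVal (w : ℕ → α) (n : ℕ) :
    (ofFun f wt q0 d hd).finVal w n =
      (ofFun f wt q0 d hd).runVal w (detRun f q0 w) n := by
  unfold finVal
  have : {x : ℝ | ∃ r : ℕ → Q, (ofFun f wt q0 d hd).FinRun w n r ∧
      x = (ofFun f wt q0 d hd).runVal w r n}
      = {(ofFun f wt q0 d hd).runVal w (detRun f q0 w) n} := by
    ext x
    constructor
    · rintro ⟨r, hr, rfl⟩
      exact (ofFun f wt q0 d hd).runVal_congr (fun _ _ => rfl) (ofFun_run_eq hr)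
    · rintro rfl
      exact ⟨detRun f q0 w, ofFun_finRun_detRun w n, rfl⟩
  rw [this, csInf_singleton]

lemma ofFun_infVal (w : ℕ → α) :
    (ofFun f wt q0 d hd).infVal w =
      (ofFun f wt q0 d hd).infRunVal w (detRun f q0 w) := by
  unfold infVal
  have : {x : ℝ | ∃ r : ℕ → Q, (ofFun f wt q0 d hd).InfRun w r ∧
      x = (ofFun f wt q0 d hd).infRunVal w r}
      = {(ofFun f wt q0 d hd).infRunVal w (detRun f q0 w)} := by
    ext x
    constructor
    · rintro ⟨r, hr, rfl⟩
      have : r = detRun f q0 w := funext (ofFun_inf_run_eq hr)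
      rw [this]; rfl
    · rintro rfl
      exact ⟨detRun f q0 w, ofFun_infRun_detRun w, rfl⟩
  rw [this, csInf_singleton]

/-- If the weights along the deterministic run vanish from position `n` on, the
infinite value equals the value of the length-`n` prefix. -/
lemma ofFun_infVal_eq_finVal (w : ℕ → α) (n : ℕ)
    (h0 : ∀ i, n ≤ i → wt (detRun f q0 w i) (w i) (detRun f q0 w (i+1)) = 0) :
    (ofFun f wt q0 d hd).infVal w = (ofFun f wt q0 d hd).finVal w n := by
  rw [ofFun_infVal, ofFun_finVal]
  unfold infRunVal runVal
  exact tsum_eq_sum (fun i hi => by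
    have := h0 i (by simpa using hi)
    show (wt _ _ _ : ℝ) * _ = 0
    rw [this]
    simp)

/-- Closed form of `runVal` for constant-discount deterministic automata. -/
lemma ofFun_runVal (w : ℕ → α) (r : ℕ → Q) (n : ℕ) :
    (ofFun f wt q0 d hd).runVal w r n =
      ∑ i ∈ Finset.range n, (wt (r i) (w i) (r (i+1)) : ℝ) * ((d:ℝ)⁻¹)^i := by
  unfold runVal
  refine Finset.sum_congr rfl fun i _ => ?_
  congr 1
  show (∏ _j ∈ Finset.range i, (1 / (d:ℝ))) = _
  rw [Finset.prod_const, Finset.card_range, one_div]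

end NMDA

namespace NMDA
variable {α Q : Type}

lemma detRun_congr {f : Q → α → Q} {q0 : Q} {w w' : ℕ → α} {n : ℕ}
    (hw : ∀ i < n, w i = w' i) : ∀ i ≤ n, detRun f q0 w i = detRun f q0 w' i := by
  intro i hi
  induction i with
  | zero => rfl
  | succ k ih =>
      show f (detRun f q0 w k) (w k) = f (detRun f q0 w' k) (w' k)
      rw [ih (by omega), hw k (by omega)]

end NMDA

open NMDA

inductive StA | s0 | s1 | s2 | z0 | z1 deriving DecidableEq
instance : Fintype StA := ⟨{.s0, .s1, .s2, .z0, .z1}, fun x => by cases x <;> simp⟩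
inductive StB | t0 | t1 | t2 | u0 | u1 | u2 deriving DecidableEq
instance : Fintype StB := ⟨{.t0, .t1, .t2, .u0, .u1, .u2}, fun x => by cases x <;> simp⟩

def fA : StA → Bool → StA
  | .s0, false => .s1
  | .s1, false => .s2
  | .s2, false => .s1
  | .z0, false => .z1
  | .z1, false => .z0
  | .s0, true => .z0
  | .s1, true => .s1
  | .s2, true => .s2
  | .z0, true => .z0
  | .z1, true => .z1

def wtA (q : StA) (σ : Bool) (_ : StA) : ℚ :=
  match σ, q with
  | true, _ => 0
  | false, .s0 => 1
  | false, .s1 => -3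
  | false, .s2 => 3
  | false, .z0 => 1
  | false, .z1 => -2

def fB : StB → Bool → StB
  | .t0, false => .t1
  | .t1, false => .t2
  | .t2, false => .t1
  | .u0, false => .u1
  | .u1, false => .u2
  | .u2, false => .u1
  | .t0, true => .u0
  | .t1, true => .t1
  | .t2, true => .t2
  | .u0, true => .u0
  | .u1, true => .u1
  | .u2, true => .u2

def wtB (q : StB) (σ : Bool) (_ : StB) : ℚ :=
  match σ, q with
  | true, _ => 0
  | false, .t0 => 1
  | false, .t1 => -4
  | false, .t2 => 4
  | false, .u0 => 1
  | false, .u1 => -4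
  | false, .u2 => 4

def AutA : NMDA Bool StA := ofFun fA wtA .s0 2 (by norm_num)
def AutB : NMDA Bool StB := ofFun fB wtB .t0 3 (by norm_num)

def wMax : ℕ → Bool := fun _ => false
def wSum : ℕ → Bool := fun i => decide (i = 0)
def wMaxI (n : ℕ) : ℕ → Bool := fun i => decide (n ≤ i)
def wSumI (n : ℕ) : ℕ → Bool := fun i => decide (i = 0 ∨ n ≤ i)

lemma wtA_true (q q' : StA) : wtA q true q' = 0 := rfl
lemma wtB_true (q q' : StB) : wtB q true q' = 0 := rfl

lemma runA_max (i : ℕ) : detRun fA .s0 wMax i =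
    (if i = 0 then .s0 else if i % 2 = 1 then .s1 else .s2) := by
  induction i with
  | zero => rfl
  | succ k ih =>
      show fA (detRun fA .s0 wMax k) (wMax k) = _
      rw [ih]
      by_cases h0 : k = 0
      · subst h0; rfl
      · by_cases h1 : k % 2 = 1
        · have h2 : (k+1) % 2 = 0 := by omega
          simp [h0, h1, h2, fA, wMax]
        · have h2 : (k+1) % 2 = 1 := by omega
          simp [h0, h1, h2, fA, wMax]

lemma runB_max (i : ℕ) : detRun fB .t0 wMax i =
    (if i = 0 then .t0 else if i % 2 = 1 then .t1 else .t2) := by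
  induction i with
  | zero => rfl
  | succ k ih =>
      show fB (detRun fB .t0 wMax k) (wMax k) = _
      rw [ih]
      by_cases h0 : k = 0
      · subst h0; rfl
      · by_cases h1 : k % 2 = 1
        · have h2 : (k+1) % 2 = 0 := by omega
          simp [h0, h1, h2, fB, wMax]
        · have h2 : (k+1) % 2 = 1 := by omega
          simp [h0, h1, h2, fB, wMax]

lemma runA_sum (i : ℕ) : detRun fA .s0 wSum i =
    (if i = 0 then .s0 else if i % 2 = 1 then .z0 else .z1) := by
  induction i with
  | zero => rfl
  | succ k ih =>
      show fA (detRun fA .s0 wSum k) (wSum k) = _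
      rw [ih]
      by_cases h0 : k = 0
      · subst h0; rfl
      · by_cases h1 : k % 2 = 1
        · have h2 : (k+1) % 2 = 0 := by omega
          simp [h0, h1, h2, fA, wSum]
        · have h2 : (k+1) % 2 = 1 := by omega
          simp [h0, h1, h2, fA, wSum]

lemma runB_sum (i : ℕ) : detRun fB .t0 wSum i =
    (if i = 0 then .t0 else if i = 1 then .u0 else if i % 2 = 0 then .u1 else .u2) := by
  induction i with
  | zero => rfl
  | succ k ih =>
      show fB (detRun fB .t0 wSum k) (wSum k) = _
      rw [ih]
      by_cases h0 : k = 0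
      · subst h0; rfl
      · by_cases h1 : k = 1
        · subst h1; rfl
        · by_cases h2 : k % 2 = 0
          · have h3 : ¬ (k+1) % 2 = 0 := by omega
            simp [h0, h1, h2, h3, fB, wSum]
          · have h3 : (k+1) % 2 = 0 := by omega
            simp [h0, h1, h2, h3, fB, wSum]

lemma AutA_runVal_succ (w : ℕ → Bool) (r : ℕ → StA) (n : ℕ) :
    AutA.runVal w r (n+1) = AutA.runVal w r n +
      (wtA (r n) (w n) (r (n+1)) : ℝ) * ((2:ℝ)⁻¹)^n := by
  rw [show AutA = ofFun fA wtA .s0 2 (by norm_num) from rfl, ofFun_runVal, ofFun_runVal,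
    Finset.sum_range_succ]
  norm_num

lemma AutB_runVal_succ (w : ℕ → Bool) (r : ℕ → StB) (n : ℕ) :
    AutB.runVal w r (n+1) = AutB.runVal w r n +
      (wtB (r n) (w n) (r (n+1)) : ℝ) * ((3:ℝ)⁻¹)^n := by
  rw [show AutB = ofFun fB wtB .t0 3 (by norm_num) from rfl, ofFun_runVal, ofFun_runVal,
    Finset.sum_range_succ]
  norm_num

lemma runVal_zero {Q : Type} (A : NMDA Bool Q) (w : ℕ → Bool) (r : ℕ → Q) :
    A.runVal w r 0 = 0 := by simp [NMDA.runVal]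

lemma pow2_even (k : ℕ) : ((2:ℝ)⁻¹)^(2*k) = ((4:ℝ)⁻¹)^k := by
  rw [pow_mul]; norm_num

lemma pow3_even (k : ℕ) : ((3:ℝ)⁻¹)^(2*k) = ((9:ℝ)⁻¹)^k := by
  rw [pow_mul]; norm_num

lemma pow2_odd (k : ℕ) : ((2:ℝ)⁻¹)^(2*k+1) = ((4:ℝ)⁻¹)^k/2 := by
  rw [pow_succ, pow2_even]; ring

lemma pow3_odd (k : ℕ) : ((3:ℝ)⁻¹)^(2*k+1) = ((9:ℝ)⁻¹)^k/3 := by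
  rw [pow_succ, pow3_even]; ring

lemma vAmax (m : ℕ) :
    AutA.runVal wMax (detRun fA .s0 wMax) (2*m+1) = ((4:ℝ)⁻¹)^m ∧
    AutA.runVal wMax (detRun fA .s0 wMax) (2*m+2) = -((4:ℝ)⁻¹)^m/2 := by
  induction m with
  | zero =>
      have hA0 : detRun fA .s0 wMax 0 = .s0 := rfl
      have hA1 : detRun fA .s0 wMax 1 = .s1 := rfl
      have hA2 : detRun fA .s0 wMax 2 = .s2 := rfl
      constructor
      · rw [show 2*0+1 = 0+1 from rfl, AutA_runVal_succ, runVal_zero, hA0, hA1]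
        norm_num [wtA, wMax]
      · rw [show 2*0+2 = (0+1)+1 from rfl, AutA_runVal_succ, AutA_runVal_succ, runVal_zero,
          hA0, hA1, hA2]
        norm_num [wtA, wMax]
  | succ k ih =>
      have hs2 : detRun fA .s0 wMax (2*k+2) = .s2 := by
        rw [runA_max, if_neg (by omega), if_neg (by omega)]
      have hs1 : detRun fA .s0 wMax (2*k+2+1) = .s1 := by
        rw [runA_max, if_neg (by omega), if_pos (by omega)]
      have hs2' : detRun fA .s0 wMax (2*k+2+1+1) = .s2 := by
        rw [runA_max, if_neg (by omega), if_neg (by omega)]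
      have h1 : AutA.runVal wMax (detRun fA .s0 wMax) (2*(k+1)+1) = ((4:ℝ)⁻¹)^(k+1) := by
        rw [show 2*(k+1)+1 = (2*k+2)+1 from by ring, AutA_runVal_succ, ih.2, hs2, hs1]
        rw [show wMax (2*k+2) = false from rfl,
          show (wtA .s2 false .s1 : ℝ) = 3 from by norm_num [wtA],
          show 2*k+2 = 2*(k+1) from by ring, pow2_even, pow_succ]
        ring
      refine ⟨h1, ?_⟩
      rw [show 2*(k+1)+2 = (2*(k+1)+1)+1 from by ring, AutA_runVal_succ, h1]
      rw [show 2*(k+1)+1 = 2*k+2+1 from by ring, hs1, hs2']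
      rw [show wMax (2*k+2+1) = false from rfl,
        show (wtA .s1 false .s2 : ℝ) = -3 from by norm_num [wtA],
        show 2*k+2+1 = 2*(k+1)+1 from by ring, pow2_odd, pow_succ]
      ring

lemma vBmax (m : ℕ) :
    AutB.runVal wMax (detRun fB .t0 wMax) (2*m+1) = ((9:ℝ)⁻¹)^m ∧
    AutB.runVal wMax (detRun fB .t0 wMax) (2*m+2) = -((9:ℝ)⁻¹)^m/3 := by
  induction m with
  | zero =>
      have hB0 : detRun fB .t0 wMax 0 = .t0 := rfl
      have hB1 : detRun fB .t0 wMax 1 = .t1 := rfl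
      have hB2 : detRun fB .t0 wMax 2 = .t2 := rfl
      constructor
      · rw [show 2*0+1 = 0+1 from rfl, AutB_runVal_succ, runVal_zero, hB0, hB1]
        norm_num [wtB, wMax]
      · rw [show 2*0+2 = (0+1)+1 from rfl, AutB_runVal_succ, AutB_runVal_succ, runVal_zero,
          hB0, hB1, hB2]
        norm_num [wtB, wMax]
  | succ k ih =>
      have hs2 : detRun fB .t0 wMax (2*k+2) = .t2 := by
        rw [runB_max, if_neg (by omega), if_neg (by omega)]
      have hs1 : detRun fB .t0 wMax (2*k+2+1) = .t1 := by
        rw [runB_max, if_neg (by omega), if_pos (by omega)]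
      have hs2' : detRun fB .t0 wMax (2*k+2+1+1) = .t2 := by
        rw [runB_max, if_neg (by omega), if_neg (by omega)]
      have h1 : AutB.runVal wMax (detRun fB .t0 wMax) (2*(k+1)+1) = ((9:ℝ)⁻¹)^(k+1) := by
        rw [show 2*(k+1)+1 = (2*k+2)+1 from by ring, AutB_runVal_succ, ih.2, hs2, hs1]
        rw [show wMax (2*k+2) = false from rfl,
          show (wtB .t2 false .t1 : ℝ) = 4 from by norm_num [wtB],
          show 2*k+2 = 2*(k+1) from by ring, pow3_even, pow_succ]
        ring
      refine ⟨h1, ?_⟩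
      rw [show 2*(k+1)+2 = (2*(k+1)+1)+1 from by ring, AutB_runVal_succ, h1]
      rw [show 2*(k+1)+1 = 2*k+2+1 from by ring, hs1, hs2']
      rw [show wMax (2*k+2+1) = false from rfl,
        show (wtB .t1 false .t2 : ℝ) = -4 from by norm_num [wtB],
        show 2*k+2+1 = 2*(k+1)+1 from by ring, pow3_odd, pow_succ]
      ring

lemma vAsum (m : ℕ) :
    AutA.runVal wSum (detRun fA .s0 wSum) (2*m+1) = 0 ∧
    AutA.runVal wSum (detRun fA .s0 wSum) (2*m+2) = ((4:ℝ)⁻¹)^m/2 := by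
  induction m with
  | zero =>
      have h0 : detRun fA .s0 wSum 0 = .s0 := rfl
      have h1 : detRun fA .s0 wSum 1 = .z0 := rfl
      have h2 : detRun fA .s0 wSum 2 = .z1 := rfl
      constructor
      · rw [show 2*0+1 = 0+1 from rfl, AutA_runVal_succ, runVal_zero, h0, h1]
        norm_num [wtA, wSum]
      · rw [show 2*0+2 = (0+1)+1 from rfl, AutA_runVal_succ, AutA_runVal_succ, runVal_zero,
          h0, h1, h2]
        norm_num [wtA, wSum]
  | succ k ih =>
      have hz1 : detRun fA .s0 wSum (2*k+2) = .z1 := by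
        rw [runA_sum, if_neg (by omega), if_neg (by omega)]
      have hz0 : detRun fA .s0 wSum (2*k+2+1) = .z0 := by
        rw [runA_sum, if_neg (by omega), if_pos (by omega)]
      have hz1' : detRun fA .s0 wSum (2*k+2+1+1) = .z1 := by
        rw [runA_sum, if_neg (by omega), if_neg (by omega)]
      have h1 : AutA.runVal wSum (detRun fA .s0 wSum) (2*(k+1)+1) = 0 := by
        rw [show 2*(k+1)+1 = (2*k+2)+1 from by ring, AutA_runVal_succ, ih.2, hz1, hz0]
        rw [show wSum (2*k+2) = false from by simp [wSum],
          show (wtA .z1 false .z0 : ℝ) = -2 from by norm_num [wtA],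
          show 2*k+2 = 2*(k+1) from by ring, pow2_even, pow_succ]
        ring
      refine ⟨h1, ?_⟩
      rw [show 2*(k+1)+2 = (2*(k+1)+1)+1 from by ring, AutA_runVal_succ, h1]
      rw [show 2*(k+1)+1 = 2*k+2+1 from by ring, hz0, hz1']
      rw [show wSum (2*k+2+1) = false from by simp [wSum],
        show (wtA .z0 false .z1 : ℝ) = 1 from by norm_num [wtA],
        show 2*k+2+1 = 2*(k+1)+1 from by ring, pow2_odd]
      ring

lemma vBsum (m : ℕ) :
    AutB.runVal wSum (detRun fB .t0 wSum) (2*m+2) = ((9:ℝ)⁻¹)^m/3 ∧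
    AutB.runVal wSum (detRun fB .t0 wSum) (2*m+3) = -((9:ℝ)⁻¹)^(m+1) := by
  induction m with
  | zero =>
      have h0 : detRun fB .t0 wSum 0 = .t0 := rfl
      have h1 : detRun fB .t0 wSum 1 = .u0 := rfl
      have h2 : detRun fB .t0 wSum 2 = .u1 := rfl
      have h3 : detRun fB .t0 wSum 3 = .u2 := rfl
      constructor
      · rw [show 2*0+2 = (0+1)+1 from rfl, AutB_runVal_succ, AutB_runVal_succ, runVal_zero,
          h0, h1, h2]
        norm_num [wtB, wSum]
      · rw [show 2*0+3 = ((0+1)+1)+1 from rfl, AutB_runVal_succ, AutB_runVal_succ,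
          AutB_runVal_succ, runVal_zero, h0, h1, h2, h3]
        norm_num [wtB, wSum]
  | succ k ih =>
      have hu2 : detRun fB .t0 wSum (2*k+3) = .u2 := by
        rw [runB_sum, if_neg (by omega), if_neg (by omega), if_neg (by omega)]
      have hu1 : detRun fB .t0 wSum (2*k+3+1) = .u1 := by
        rw [runB_sum, if_neg (by omega), if_neg (by omega), if_pos (by omega)]
      have hu2' : detRun fB .t0 wSum (2*k+3+1+1) = .u2 := by
        rw [runB_sum, if_neg (by omega), if_neg (by omega), if_neg (by omega)]
      have h1 : AutB.runVal wSum (detRun fB .t0 wSum) (2*(k+1)+2) = ((9:ℝ)⁻¹)^(k+1)/3 := by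
        rw [show 2*(k+1)+2 = (2*k+3)+1 from by ring, AutB_runVal_succ, ih.2, hu2, hu1]
        rw [show wSum (2*k+3) = false from by simp [wSum],
          show (wtB .u2 false .u1 : ℝ) = 4 from by norm_num [wtB],
          show 2*k+3 = 2*(k+1)+1 from by ring, pow3_odd]
        ring
      refine ⟨h1, ?_⟩
      rw [show 2*(k+1)+3 = (2*(k+1)+2)+1 from by ring, AutB_runVal_succ, h1]
      rw [show 2*(k+1)+2 = 2*k+3+1 from by ring, hu1, hu2']
      rw [show wSum (2*k+3+1) = false from by simp [wSum],
        show (wtB .u1 false .u2 : ℝ) = -4 from by norm_num [wtB],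
        show 2*k+3+1 = 2*(k+2) from by ring, pow3_even, pow_succ, pow_succ]
      ring

lemma AutA_finVal (w : ℕ → Bool) (n : ℕ) :
    AutA.finVal w n = AutA.runVal w (detRun fA .s0 w) n :=
  ofFun_finVal w n

lemma AutB_finVal (w : ℕ → Bool) (n : ℕ) :
    AutB.finVal w n = AutB.runVal w (detRun fB .t0 w) n :=
  ofFun_finVal w n

lemma AutA_infVal_max (n : ℕ) : AutA.infVal (wMaxI n) = AutA.finVal wMax n := by
  have hw : ∀ i < n, wMaxI n i = wMax i := by
    intro i hi; simp only [wMaxI, wMax, decide_eq_false_iff_not]; omega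
  have h1 : AutA.infVal (wMaxI n) = AutA.finVal (wMaxI n) n :=
    ofFun_infVal_eq_finVal (wMaxI n) n (fun i hi => by
      rw [show wMaxI n i = true from by simp [wMaxI, hi]]; exact wtA_true _ _)
  rw [h1, AutA_finVal, AutA_finVal]
  exact AutA.runVal_congr hw (detRun_congr hw)

lemma AutB_infVal_max (n : ℕ) : AutB.infVal (wMaxI n) = AutB.finVal wMax n := by
  have hw : ∀ i < n, wMaxI n i = wMax i := by
    intro i hi; simp only [wMaxI, wMax, decide_eq_false_iff_not]; omega
  have h1 : AutB.infVal (wMaxI n) = AutB.finVal (wMaxI n) n :=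
    ofFun_infVal_eq_finVal (wMaxI n) n (fun i hi => by
      rw [show wMaxI n i = true from by simp [wMaxI, hi]]; exact wtB_true _ _)
  rw [h1, AutB_finVal, AutB_finVal]
  exact AutB.runVal_congr hw (detRun_congr hw)

lemma AutA_infVal_sum (n : ℕ) : AutA.infVal (wSumI n) = AutA.finVal wSum n := by
  have hw : ∀ i < n, wSumI n i = wSum i := by
    intro i hi
    simp only [wSumI, wSum]
    congr 1
    simp only [eq_iff_iff, or_iff_left_iff_imp]
    omega
  have h1 : AutA.infVal (wSumI n) = AutA.finVal (wSumI n) n :=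
    ofFun_infVal_eq_finVal (wSumI n) n (fun i hi => by
      rw [show wSumI n i = true from by simp [wSumI]; omega]; exact wtA_true _ _)
  rw [h1, AutA_finVal, AutA_finVal]
  exact AutA.runVal_congr hw (detRun_congr hw)

lemma AutB_infVal_sum (n : ℕ) : AutB.infVal (wSumI n) = AutB.finVal wSum n := by
  have hw : ∀ i < n, wSumI n i = wSum i := by
    intro i hi
    simp only [wSumI, wSum]
    congr 1
    simp only [eq_iff_iff, or_iff_left_iff_imp]
    omega
  have h1 : AutB.infVal (wSumI n) = AutB.finVal (wSumI n) n :=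
    ofFun_infVal_eq_finVal (wSumI n) n (fun i hi => by
      rw [show wSumI n i = true from by simp [wSumI]; omega]; exact wtB_true _ _)
  rw [h1, AutB_finVal, AutB_finVal]
  exact AutB.runVal_congr hw (detRun_congr hw)

section KeyHelpers

variable {α Q : Type}

lemma den_dvd_int (q : ℚ) (N : ℕ) (h : (q.den : ℕ) ∣ N) :
    ∃ m : ℤ, (N:ℝ) * (q:ℝ) = (m:ℝ) := by
  obtain ⟨c, hc⟩ := h
  refine ⟨q.num * c, ?_⟩
  have hden : ((q.den:ℝ)) ≠ 0 := Nat.cast_ne_zero.mpr q.den_nz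
  rw [hc]
  push_cast
  rw [Rat.cast_def]
  field_simp

/-- The product of the inverse discounts along a run equals the inverse of the product
of the integer discounts. -/
lemma prod_inv_disc (C : NMDA α Q) (K : Q → α → Q → ℤ)
    (hKd : ∀ q a q', C.delta q a q' → (K q a q' : ℚ) = C.disc q a q')
    (w : ℕ → α) (r : ℕ → Q) {i n : ℕ} (hin : i ≤ n)
    (hr : ∀ j < n, C.delta (r j) (w j) (r (j+1))) :
    ∏ j ∈ Finset.range i, (1 / (C.disc (r j) (w j) (r (j+1)) : ℝ)) =
      (∏ j ∈ Finset.range i, ((K (r j) (w j) (r (j+1)) : ℤ) : ℝ))⁻¹ := by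
  rw [← Finset.prod_inv_distrib]
  refine Finset.prod_congr rfl fun j hj => ?_
  simp only [Finset.mem_range] at hj
  have h := hKd (r j) (w j) (r (j+1)) (hr j (by omega))
  rw [one_div, ← h, Rat.cast_intCast]

lemma prod_K_ge (K : Q → α → Q → ℤ) (hK2 : ∀ q a q', 2 ≤ K q a q')
    (w : ℕ → α) (r : ℕ → Q) (n : ℕ) :
    (2:ℤ)^n ≤ ∏ j ∈ Finset.range n, K (r j) (w j) (r (j+1)) := by
  calc (2:ℤ)^n = ∏ _j ∈ Finset.range n, (2:ℤ) := by
        rw [Finset.prod_const, Finset.card_range]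
    _ ≤ _ := Finset.prod_le_prod (fun _ _ => by norm_num) (fun j _ => hK2 _ _ _)

lemma prod_K_pos (K : Q → α → Q → ℤ) (hK2 : ∀ q a q', 2 ≤ K q a q')
    (w : ℕ → α) (r : ℕ → Q) (n : ℕ) :
    (0:ℝ) < ∏ j ∈ Finset.range n, ((K (r j) (w j) (r (j+1)) : ℤ) : ℝ) :=
  Finset.prod_pos fun j _ => by
    have := hK2 (r j) (w j) (r (j+1)); positivity

lemma key_int_run (C : NMDA α Q) (N : ℕ)
    (hN : ∀ q a q', ((C.weight q a q').den : ℕ) ∣ N)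
    (K : Q → α → Q → ℤ)
    (hKd : ∀ q a q', C.delta q a q' → (K q a q' : ℚ) = C.disc q a q')
    (hK2 : ∀ q a q', 2 ≤ K q a q')
    (w : ℕ → α) (r : ℕ → Q) (n : ℕ)
    (hr : ∀ j < n, C.delta (r j) (w j) (r (j+1))) :
    ∃ m : ℤ, (N:ℝ) * (∏ j ∈ Finset.range n, ((K (r j) (w j) (r (j+1)) : ℤ) : ℝ))
        * C.runVal w r n = (m:ℝ) := by
  choose mi hmi using fun i : ℕ =>
    den_dvd_int (C.weight (r i) (w i) (r (i+1))) N (hN _ _ _)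
  refine ⟨∑ i ∈ Finset.range n, mi i * ∏ j ∈ Finset.Ico i n, K (r j) (w j) (r (j+1)), ?_⟩
  unfold runVal
  rw [Finset.mul_sum]
  push_cast
  refine Finset.sum_congr rfl fun i hi => ?_
  simp only [Finset.mem_range] at hi
  rw [prod_inv_disc C K hKd w r (le_of_lt hi) hr]
  have hsplit : (∏ j ∈ Finset.range n, ((K (r j) (w j) (r (j+1)) : ℤ) : ℝ)) =
      (∏ j ∈ Finset.range i, ((K (r j) (w j) (r (j+1)) : ℤ) : ℝ)) *
      (∏ j ∈ Finset.Ico i n, ((K (r j) (w j) (r (j+1)) : ℤ) : ℝ)) :=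
    (Finset.prod_range_mul_prod_Ico _ (le_of_lt hi)).symm
  have hP1 : (∏ j ∈ Finset.range i, ((K (r j) (w j) (r (j+1)) : ℤ) : ℝ)) ≠ 0 :=
    ne_of_gt (prod_K_pos K hK2 w r i)
  calc (N:ℝ) * (∏ j ∈ Finset.range n, ((K (r j) (w j) (r (j+1)) : ℤ) : ℝ)) *
        ((C.weight (r i) (w i) (r (i+1)) : ℝ) *
          (∏ j ∈ Finset.range i, ((K (r j) (w j) (r (j+1)) : ℤ) : ℝ))⁻¹)
      = ((N:ℝ) * (C.weight (r i) (w i) (r (i+1)) : ℝ)) *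
          (∏ j ∈ Finset.Ico i n, ((K (r j) (w j) (r (j+1)) : ℤ) : ℝ)) *
          ((∏ j ∈ Finset.range i, ((K (r j) (w j) (r (j+1)) : ℤ) : ℝ)) *
            (∏ j ∈ Finset.range i, ((K (r j) (w j) (r (j+1)) : ℤ) : ℝ))⁻¹) := by
        rw [hsplit]; ring
    _ = ((mi i : ℝ)) * (∏ j ∈ Finset.Ico i n, ((K (r j) (w j) (r (j+1)) : ℤ) : ℝ)) := by
        rw [mul_inv_cancel₀ hP1, mul_one, hmi i]

end KeyHelpers

section KeySetup

variable {α Q : Type}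

open Classical in
lemma exists_NWK [Fintype α] [Fintype Q] (C : NMDA α Q) (hInt : C.Integral) :
    ∃ (N : ℕ) (Wr : ℝ) (K : Q → α → Q → ℤ),
      1 ≤ N ∧ 1 ≤ Wr ∧
      (∀ q a q', ((C.weight q a q').den : ℕ) ∣ N) ∧
      (∀ q a q', |(C.weight q a q' : ℝ)| ≤ Wr) ∧
      (∀ q a q', C.delta q a q' → (K q a q' : ℚ) = C.disc q a q') ∧
      (∀ q a q', 2 ≤ K q a q') := by
  refine ⟨∏ t ∈ (Finset.univ : Finset (Q × α × Q)), (C.weight t.1 t.2.1 t.2.2).den,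
    1 + ∑ t ∈ (Finset.univ : Finset (Q × α × Q)), |(C.weight t.1 t.2.1 t.2.2 : ℝ)|,
    fun q a q' => if h : C.delta q a q' then Classical.choose (hInt q a q' h) else 2,
    ?_, ?_, ?_, ?_, ?_, ?_⟩
  · exact Nat.one_le_iff_ne_zero.mpr (Finset.prod_ne_zero_iff.mpr
      (fun t _ => (Rat.den_nz _)))
  · have : (0:ℝ) ≤ ∑ t ∈ (Finset.univ : Finset (Q × α × Q)),
        |(C.weight t.1 t.2.1 t.2.2 : ℝ)| :=
      Finset.sum_nonneg fun t _ => abs_nonneg _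
    linarith
  · intro q a q'
    exact Finset.dvd_prod_of_mem (fun t => (C.weight t.1 t.2.1 t.2.2).den)
      (Finset.mem_univ (q, a, q'))
  · intro q a q'
    have h1 : |(C.weight q a q' : ℝ)| ≤ ∑ t ∈ (Finset.univ : Finset (Q × α × Q)),
        |(C.weight t.1 t.2.1 t.2.2 : ℝ)| :=
      Finset.single_le_sum (f := fun t : Q × α × Q => |(C.weight t.1 t.2.1 t.2.2 : ℝ)|)
        (fun t _ => abs_nonneg _) (Finset.mem_univ (q, a, q'))
    linarith
  · intro q a q' h
    simp only [dif_pos h]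
    exact (Classical.choose_spec (hInt q a q' h)).symm
  · intro q a q'
    by_cases h : C.delta q a q'
    · simp only [dif_pos h]
      have h1 : (1:ℚ) < C.disc q a q' := C.disc_gt_one q a q' h
      have h2 : ((Classical.choose (hInt q a q' h) : ℤ) : ℚ) = C.disc q a q' :=
        (Classical.choose_spec (hInt q a q' h)).symm
      have : (1:ℤ) < Classical.choose (hInt q a q' h) := by
        rw [← h2] at h1; exact_mod_cast h1
      omega
    · simp only [dif_neg h]; omega

lemma growth_bound (c : ℝ) : ∃ n0 : ℕ, ∀ n ≥ n0, c * 2^n < 3^n := by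
  obtain ⟨n0, hn0⟩ := pow_unbounded_of_one_lt (R := ℝ) c (by norm_num : (1:ℝ) < 3/2)
  refine ⟨n0, fun n hn => ?_⟩
  have h1 : (3/2:ℝ)^n0 ≤ (3/2)^n := pow_le_pow_right₀ (by norm_num) hn
  have h2 : c < (3/2)^n := lt_of_lt_of_le hn0 h1
  have h3 : (0:ℝ) < 2^n := by positivity
  have : (3/2:ℝ)^n = 3^n / 2^n := div_pow 3 2 n
  rw [this] at h2
  calc c * 2^n < (3^n / 2^n) * 2^n := by exact mul_lt_mul_of_pos_right h2 h3
    _ = 3^n := by field_simp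

end KeySetup

lemma finKey {Q : Type} [Fintype Q] (C : NMDA Bool Q) (hInt : C.Integral) (w : ℕ → Bool)
    (hval : ∀ k : ℕ, ∃ n, k ≤ n ∧
      C.finVal w (n+1) = -((3:ℝ)^n)⁻¹ ∧
      ((2:ℝ)^(n+1))⁻¹ + C.finVal w (n+1) ≤ C.finVal w (n+2)) : False := by
  obtain ⟨N, Wr, K, hN1, hW1, hNdvd, hWle, hKd, hK2⟩ := exists_NWK C hInt
  obtain ⟨n0, hn0⟩ := growth_bound ((N:ℝ) * Wr * 2)
  obtain ⟨n, hn, hv1, hv2⟩ := hval n0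
  obtain ⟨r, hrun, hmin⟩ := C.finVal_exists_min w (n+1)
  set D : ℝ := ∏ j ∈ Finset.range (n+1), ((K (r j) (w j) (r (j+1)) : ℤ) : ℝ) with hD
  have hDpos : 0 < D := prod_K_pos K hK2 w r (n+1)
  obtain ⟨m, hm⟩ := key_int_run C N hNdvd K hKd hK2 w r (n+1) hrun.2
  -- extended run
  set q'' := (C.complete (r (n+1)) (w (n+1))).choose with hq''
  have hq'spec := (C.complete (r (n+1)) (w (n+1))).choose_spec
  set r' : ℕ → Q := fun i => if i ≤ n+1 then r i else q'' with hr'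
  have hrr' : ∀ i ≤ n+1, r' i = r i := fun i hi => by simp [hr', hi]
  have hrun' : C.FinRun w (n+2) r' := by
    constructor
    · rw [hrr' 0 (by omega)]; exact hrun.1
    · intro i hi
      rcases Nat.lt_or_ge i (n+1) with h|h
      · rw [hrr' i (by omega), hrr' (i+1) (by omega)]; exact hrun.2 i h
      · have hie : i = n+1 := by omega
        subst hie
        rw [hrr' (n+1) le_rfl, show r' (n+1+1) = q'' from by simp [hr']]
        exact hq'spec
  have hprod : ∏ j ∈ Finset.range (n+1), (1/(C.disc (r' j) (w j) (r' (j+1)) : ℝ)) = D⁻¹ := by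
    have hcg : ∀ j ∈ Finset.range (n+1), (1/(C.disc (r' j) (w j) (r' (j+1)) : ℝ))
        = 1/(C.disc (r j) (w j) (r (j+1)) : ℝ) := fun j hj => by
      simp only [Finset.mem_range] at hj
      rw [hrr' j (by omega), hrr' (j+1) (by omega)]
    rw [Finset.prod_congr rfl hcg, prod_inv_disc C K hKd w r le_rfl hrun.2]
  have hval2 : C.finVal w (n+2) ≤ C.finVal w (n+1) +
      (C.weight (r (n+1)) (w (n+1)) q'' : ℝ) * D⁻¹ := by
    have h1 := C.finVal_le hrun'
    rw [runVal_succ, hprod] at h1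
    have h2 : C.runVal w r' (n+1) = C.runVal w r (n+1) :=
      C.runVal_congr (fun _ _ => rfl) hrr'
    rw [h2, hrr' (n+1) le_rfl, show r' (n+1+1) = q'' from by simp [hr'], ← hmin] at h1
    exact h1
  -- upper bound on D
  have hDle : D ≤ Wr * 2^(n+1) := by
    have h4 : ((2:ℝ)^(n+1))⁻¹ ≤ Wr * D⁻¹ := by
      have hw' := le_trans (le_abs_self _) (hWle (r (n+1)) (w (n+1)) q'')
      have hDinv : (0:ℝ) < D⁻¹ := inv_pos.mpr hDpos
      nlinarith
    have h2p : (0:ℝ) < 2^(n+1) := by positivity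
    calc D = D * (((2:ℝ)^(n+1))⁻¹ * 2^(n+1)) := by
          rw [inv_mul_cancel₀ (ne_of_gt h2p), mul_one]
      _ ≤ D * ((Wr * D⁻¹) * 2^(n+1)) :=
          mul_le_mul_of_nonneg_left
            (mul_le_mul_of_nonneg_right h4 (le_of_lt h2p)) (le_of_lt hDpos)
      _ = Wr * 2^(n+1) * (D * D⁻¹) := by ring
      _ = Wr * 2^(n+1) := by rw [mul_inv_cancel₀ (ne_of_gt hDpos), mul_one]
  -- lower bound on D from the denominator of the value
  have h3p : (0:ℝ) < 3^n := by positivity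
  have hNpos : (0:ℝ) < (N:ℝ) := by exact_mod_cast hN1
  have hND : (3:ℝ)^n ≤ (N:ℝ) * D := by
    have hrv : C.runVal w r (n+1) = -((3:ℝ)^n)⁻¹ := by rw [← hmin, hv1]
    rw [hrv] at hm
    have hNDpos : (0:ℝ) < (N:ℝ)*D := mul_pos hNpos hDpos
    have e3 : ((3:ℝ)^n)⁻¹ * 3^n = 1 := inv_mul_cancel₀ (ne_of_gt h3p)
    have e : (N:ℝ)*D = -(m:ℝ) * 3^n := by
      have h5 := congrArg (fun x : ℝ => x * 3^n) hm
      calc (N:ℝ)*D = (N:ℝ)*D * (((3:ℝ)^n)⁻¹ * 3^n) := by rw [e3, mul_one]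
        _ = ↑N * D * -(3 ^ n)⁻¹ * 3 ^ n * (-1) := by ring
        _ = -(m:ℝ) * 3^n := by rw [h5]; ring
    have hmlt : (m:ℝ) < 0 := by nlinarith
    have hmz : m ≤ -1 := by
      have : m < 0 := by exact_mod_cast hmlt
      omega
    have hmz' : (1:ℝ) ≤ -(m:ℝ) := by
      have : (m:ℝ) ≤ -1 := by exact_mod_cast hmz
      linarith
    have h6 := mul_le_mul_of_nonneg_right hmz' (le_of_lt h3p)
    rw [one_mul] at h6
    linarith
  have hc := hn0 n hn
  have hchain : (N:ℝ)*D ≤ (N:ℝ)*(Wr*2^(n+1)) :=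
    mul_le_mul_of_nonneg_left hDle (Nat.cast_nonneg N)
  have hp : (2:ℝ)^(n+1) = 2^n*2 := pow_succ 2 n
  rw [hp] at hchain
  linarith

lemma pw31 (k : ℕ) : ((3:ℝ)^(2*k+1))⁻¹ = ((9:ℝ)⁻¹)^k/3 := by
  rw [← inv_pow, pow3_odd]
lemma pw32 (k : ℕ) : ((3:ℝ)^(2*k+2))⁻¹ = ((9:ℝ)⁻¹)^(k+1) := by
  rw [← inv_pow, show 2*k+2 = 2*(k+1) from by ring, pow3_even]
lemma pw21 (k : ℕ) : ((2:ℝ)^(2*k+2))⁻¹ = ((4:ℝ)⁻¹)^(k+1) := by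
  rw [← inv_pow, show 2*k+2 = 2*(k+1) from by ring, pow2_even]
lemma pw22 (k : ℕ) : ((2:ℝ)^(2*k+3))⁻¹ = ((4:ℝ)⁻¹)^(k+1)/2 := by
  rw [← inv_pow, show 2*k+3 = 2*(k+1)+1 from by ring, pow2_odd]

lemma hle94 (m : ℕ) : ((9:ℝ)⁻¹)^m ≤ ((4:ℝ)⁻¹)^m :=
  pow_le_pow_left₀ (by norm_num) (by norm_num) m
lemma h9pos (m : ℕ) : (0:ℝ) < ((9:ℝ)⁻¹)^m := by positivity
lemma h4pos (m : ℕ) : (0:ℝ) < ((4:ℝ)⁻¹)^m := by positivity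

lemma Afin_max_odd (m : ℕ) : AutA.finVal wMax (2*m+1) = ((4:ℝ)⁻¹)^m := by
  rw [AutA_finVal]; exact (vAmax m).1
lemma Afin_max_even (m : ℕ) : AutA.finVal wMax (2*m+2) = -((4:ℝ)⁻¹)^m/2 := by
  rw [AutA_finVal]; exact (vAmax m).2
lemma Bfin_max_odd (m : ℕ) : AutB.finVal wMax (2*m+1) = ((9:ℝ)⁻¹)^m := by
  rw [AutB_finVal]; exact (vBmax m).1
lemma Bfin_max_even (m : ℕ) : AutB.finVal wMax (2*m+2) = -((9:ℝ)⁻¹)^m/3 := by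
  rw [AutB_finVal]; exact (vBmax m).2
lemma Afin_sum_odd (m : ℕ) : AutA.finVal wSum (2*m+1) = 0 := by
  rw [AutA_finVal]; exact (vAsum m).1
lemma Afin_sum_even (m : ℕ) : AutA.finVal wSum (2*m+2) = ((4:ℝ)⁻¹)^m/2 := by
  rw [AutA_finVal]; exact (vAsum m).2
lemma Bfin_sum_even (m : ℕ) : AutB.finVal wSum (2*m+2) = ((9:ℝ)⁻¹)^m/3 := by
  rw [AutB_finVal]; exact (vBsum m).1
lemma Bfin_sum_odd (m : ℕ) : AutB.finVal wSum (2*m+3) = -((9:ℝ)⁻¹)^(m+1) := by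
  rw [AutB_finVal]; exact (vBsum m).2

lemma max_fin_assemble {Q : Type} [Fintype Q] (C : NMDA Bool Q) (hInt : C.Integral)
    (hEq : ∀ (w : ℕ → Bool) (n : ℕ), 0 < n →
      C.finVal w n = max (AutA.finVal w n) (AutB.finVal w n)) : False := by
  apply finKey C hInt wMax
  intro k
  refine ⟨2*k+1, by omega, ?_, ?_⟩
  · rw [hEq wMax (2*k+1+1) (by omega), show 2*k+1+1 = 2*k+2 from by ring,
      Afin_max_even, Bfin_max_even, pw31]
    rw [max_eq_right (by nlinarith [hle94 k, h9pos k, h4pos k])]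
    ring
  · rw [hEq wMax (2*k+1+1) (by omega), hEq wMax (2*k+1+2) (by omega),
      show 2*k+1+1 = 2*k+2 from by ring, show 2*k+1+2 = 2*(k+1)+1 from by ring,
      Afin_max_even, Bfin_max_even, Afin_max_odd, Bfin_max_odd,
      max_eq_right (by nlinarith [hle94 k, h9pos k, h4pos k] : -((4:ℝ)⁻¹)^k/2 ≤ -((9:ℝ)⁻¹)^k/3),
      max_eq_left (hle94 (k+1)),
      show (2:ℝ)^(2*k+1+1) = 2^(2*k+2) from by norm_num, pw21]
    nlinarith [h9pos k]

lemma sum_fin_assemble {Q : Type} [Fintype Q] (C : NMDA Bool Q) (hInt : C.Integral)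
    (hEq : ∀ (w : ℕ → Bool) (n : ℕ), 0 < n →
      C.finVal w n = AutA.finVal w n + AutB.finVal w n) : False := by
  apply finKey C hInt wSum
  intro k
  refine ⟨2*k+2, by omega, ?_, ?_⟩
  · rw [hEq wSum (2*k+2+1) (by omega), show 2*k+2+1 = 2*k+3 from by ring,
      show 2*k+3 = 2*(k+1)+1 from by ring, Afin_sum_odd,
      show 2*(k+1)+1 = 2*k+3 from by ring, Bfin_sum_odd, pw32]
    ring
  · rw [hEq wSum (2*k+2+1) (by omega), hEq wSum (2*k+2+2) (by omega),
      show 2*k+2+1 = 2*(k+1)+1 from by ring, Afin_sum_odd,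
      show 2*(k+1)+1 = 2*k+3 from by ring, Bfin_sum_odd,
      show 2*k+3+1 = 2*(k+1)+2 from by ring, Afin_sum_even, Bfin_sum_even,
      show (2:ℝ)^(2*k+2+1) = 2^(2*k+3) from by norm_num, pw22]
    nlinarith [h9pos (k+1)]

section InfPart

variable {Q : Type} (C : NMDA Bool Q) (K : Q → Bool → Q → ℤ) (Wr : ℝ)

lemma term_abs_le
    (hKd : ∀ q a q', C.delta q a q' → (K q a q' : ℚ) = C.disc q a q')
    (hK2 : ∀ q a q', 2 ≤ K q a q')
    (hWle : ∀ q a q', |(C.weight q a q' : ℝ)| ≤ Wr)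
    (w : ℕ → Bool) (r : ℕ → Q) (hr : ∀ i, C.delta (r i) (w i) (r (i+1))) (i : ℕ) :
    |(C.weight (r i) (w i) (r (i+1)) : ℝ) *
      ∏ j ∈ Finset.range i, (1 / (C.disc (r j) (w j) (r (j+1)) : ℝ))| ≤ Wr * (1/2)^i := by
  rw [abs_mul, prod_inv_disc C K hKd w r (le_refl i) (fun j _ => hr j)]
  have hPpos := prod_K_pos K hK2 w r i
  have hPge : (2:ℝ)^i ≤ ∏ j ∈ Finset.range i, ((K (r j) (w j) (r (j+1)) : ℤ) : ℝ) := by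
    have := prod_K_ge K hK2 w r i
    calc (2:ℝ)^i = (((2:ℤ)^i : ℤ) : ℝ) := by push_cast; ring
      _ ≤ _ := by exact_mod_cast this
  have h2i : (0:ℝ) < 2^i := by positivity
  have hinv : |(∏ j ∈ Finset.range i, ((K (r j) (w j) (r (j+1)) : ℤ) : ℝ))⁻¹|
      ≤ (1/2)^i := by
    rw [abs_inv, abs_of_pos hPpos, one_div, inv_pow]
    exact inv_anti₀ h2i hPge
  have h1 := hWle (r i) (w i) (r (i+1))
  have h2 : (0:ℝ) ≤ |(∏ j ∈ Finset.range i, ((K (r j) (w j) (r (j+1)) : ℤ) : ℝ))⁻¹| :=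
    abs_nonneg _
  have hWnn : (0:ℝ) ≤ Wr := le_trans (abs_nonneg _) h1
  calc |(C.weight (r i) (w i) (r (i+1)) : ℝ)| *
        |(∏ j ∈ Finset.range i, ((K (r j) (w j) (r (j+1)) : ℤ) : ℝ))⁻¹|
      ≤ Wr * (1/2)^i := by
        apply mul_le_mul h1 hinv h2 hWnn

lemma run_abs_summable
    (hKd : ∀ q a q', C.delta q a q' → (K q a q' : ℚ) = C.disc q a q')
    (hK2 : ∀ q a q', 2 ≤ K q a q')
    (hWle : ∀ q a q', |(C.weight q a q' : ℝ)| ≤ Wr)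
    (w : ℕ → Bool) (r : ℕ → Q) (hr : ∀ i, C.delta (r i) (w i) (r (i+1))) :
    Summable (fun i => |(C.weight (r i) (w i) (r (i+1)) : ℝ) *
      ∏ j ∈ Finset.range i, (1 / (C.disc (r j) (w j) (r (j+1)) : ℝ))|) :=
  Summable.of_nonneg_of_le (fun i => abs_nonneg _)
    (term_abs_le C K Wr hKd hK2 hWle w r hr)
    (summable_geometric_two.mul_left Wr)

lemma run_summable
    (hKd : ∀ q a q', C.delta q a q' → (K q a q' : ℚ) = C.disc q a q')
    (hK2 : ∀ q a q', 2 ≤ K q a q')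
    (hWle : ∀ q a q', |(C.weight q a q' : ℝ)| ≤ Wr)
    (w : ℕ → Bool) (r : ℕ → Q) (hr : ∀ i, C.delta (r i) (w i) (r (i+1))) :
    Summable (fun i => (C.weight (r i) (w i) (r (i+1)) : ℝ) *
      ∏ j ∈ Finset.range i, (1 / (C.disc (r j) (w j) (r (j+1)) : ℝ))) :=
  (run_abs_summable C K Wr hKd hK2 hWle w r hr).of_abs

lemma infRunVal_abs_le
    (hKd : ∀ q a q', C.delta q a q' → (K q a q' : ℚ) = C.disc q a q')
    (hK2 : ∀ q a q', 2 ≤ K q a q')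
    (hWle : ∀ q a q', |(C.weight q a q' : ℝ)| ≤ Wr)
    (w : ℕ → Bool) (r : ℕ → Q) (hr : ∀ i, C.delta (r i) (w i) (r (i+1))) :
    |C.infRunVal w r| ≤ 2*Wr := by
  unfold infRunVal
  have h1 : |∑' i, (C.weight (r i) (w i) (r (i+1)) : ℝ) *
      ∏ j ∈ Finset.range i, (1 / (C.disc (r j) (w j) (r (j+1)) : ℝ))|
      ≤ ∑' i, |(C.weight (r i) (w i) (r (i+1)) : ℝ) *
      ∏ j ∈ Finset.range i, (1 / (C.disc (r j) (w j) (r (j+1)) : ℝ))| := by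
    have := norm_tsum_le_tsum_norm (f := fun i => (C.weight (r i) (w i) (r (i+1)) : ℝ) *
      ∏ j ∈ Finset.range i, (1 / (C.disc (r j) (w j) (r (j+1)) : ℝ)))
      (by simp only [Real.norm_eq_abs]
          exact run_abs_summable C K Wr hKd hK2 hWle w r hr)
    simp only [Real.norm_eq_abs] at this
    exact this
  have h2 : ∑' i, |(C.weight (r i) (w i) (r (i+1)) : ℝ) *
      ∏ j ∈ Finset.range i, (1 / (C.disc (r j) (w j) (r (j+1)) : ℝ))|
      ≤ ∑' i : ℕ, Wr * (1/2)^i :=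
    Summable.tsum_le_tsum (term_abs_le C K Wr hKd hK2 hWle w r hr)
      (run_abs_summable C K Wr hKd hK2 hWle w r hr)
      (summable_geometric_two.mul_left Wr)
  have h3 : ∑' i : ℕ, Wr * (1/2:ℝ)^i = 2*Wr := by
    rw [tsum_mul_left, tsum_geometric_two]; ring
  linarith

lemma infRunVal_split (w : ℕ → Bool) (r : ℕ → Q)
    (hsum : Summable (fun i => (C.weight (r i) (w i) (r (i+1)) : ℝ) *
      ∏ j ∈ Finset.range i, (1 / (C.disc (r j) (w j) (r (j+1)) : ℝ)))) (n : ℕ) :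
    C.infRunVal w r = C.runVal w r n +
      (∏ j ∈ Finset.range n, (1 / (C.disc (r j) (w j) (r (j+1)) : ℝ))) *
      ∑' i, ((C.weight (r (n+i)) (w (n+i)) (r (n+i+1)) : ℝ) *
        ∏ j ∈ Finset.range i, (1 / (C.disc (r (n+j)) (w (n+j)) (r (n+j+1)) : ℝ))) := by
  have h := Summable.sum_add_tsum_nat_add (f := fun i => (C.weight (r i) (w i) (r (i+1)) : ℝ) *
      ∏ j ∈ Finset.range i, (1 / (C.disc (r j) (w j) (r (j+1)) : ℝ))) n hsum
  unfold infRunVal runVal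
  rw [← h]
  congr 1
  rw [← tsum_mul_left]
  apply tsum_congr
  intro i
  have e1 : i + n = n + i := by ring
  have e2 : ∏ j ∈ Finset.range (n+i), (1 / (C.disc (r j) (w j) (r (j+1)) : ℝ)) =
      (∏ j ∈ Finset.range n, (1 / (C.disc (r j) (w j) (r (j+1)) : ℝ))) *
      ∏ j ∈ Finset.range i, (1 / (C.disc (r (n+j)) (w (n+j)) (r (n+j+1)) : ℝ)) := by
    rw [← Finset.prod_range_mul_prod_Ico _ (show n ≤ n+i by omega),
      Finset.prod_Ico_eq_prod_range]
    congr 1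
    · rw [show n + i - n = i from by omega]
  simp only [e1, e2]
  ring

def tailSet (C : NMDA Bool Q) (q : Q) : Set ℝ :=
  {x | ∃ t : ℕ → Q, t 0 = q ∧ (∀ i, C.delta (t i) true (t (i+1))) ∧
    x = C.infRunVal (fun _ => true) t}

noncomputable def Hfun (C : NMDA Bool Q) (q : Q) : ℝ := sInf (tailSet C q)

lemma tailSet_nonempty (q : Q) : (tailSet C q).Nonempty :=
  ⟨_, C.someRunFrom (fun _ => true) q, rfl,
    fun i => C.someRunFrom_step (fun _ => true) q i, rfl⟩

lemma tailSet_bdd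
    (hKd : ∀ q a q', C.delta q a q' → (K q a q' : ℚ) = C.disc q a q')
    (hK2 : ∀ q a q', 2 ≤ K q a q')
    (hWle : ∀ q a q', |(C.weight q a q' : ℝ)| ≤ Wr)
    (q : Q) {x : ℝ} (hx : x ∈ tailSet C q) : -(2*Wr) ≤ x ∧ x ≤ 2*Wr := by
  obtain ⟨t, ht0, htd, rfl⟩ := hx
  have := infRunVal_abs_le C K Wr hKd hK2 hWle (fun _ => true) t htd
  constructor <;> [linarith [abs_le.mp this]; linarith [abs_le.mp this]]

lemma tailSet_bddBelow
    (hKd : ∀ q a q', C.delta q a q' → (K q a q' : ℚ) = C.disc q a q')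
    (hK2 : ∀ q a q', 2 ≤ K q a q')
    (hWle : ∀ q a q', |(C.weight q a q' : ℝ)| ≤ Wr)
    (q : Q) : BddBelow (tailSet C q) :=
  ⟨-(2*Wr), fun _ hx => (tailSet_bdd C K Wr hKd hK2 hWle q hx).1⟩

lemma Hfun_bounds
    (hKd : ∀ q a q', C.delta q a q' → (K q a q' : ℚ) = C.disc q a q')
    (hK2 : ∀ q a q', 2 ≤ K q a q')
    (hWle : ∀ q a q', |(C.weight q a q' : ℝ)| ≤ Wr)
    (q : Q) : -(2*Wr) ≤ Hfun C q ∧ Hfun C q ≤ 2*Wr := by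
  constructor
  · exact le_csInf (tailSet_nonempty C q)
      (fun x hx => (tailSet_bdd C K Wr hKd hK2 hWle q hx).1)
  · obtain ⟨x, hx⟩ := tailSet_nonempty C q
    exact le_trans (csInf_le (tailSet_bddBelow C K Wr hKd hK2 hWle q) hx)
      (tailSet_bdd C K Wr hKd hK2 hWle q hx).2

def wIf (u : ℕ → Bool) (n : ℕ) : ℕ → Bool := fun i => if i < n then u i else true

lemma wIf_ge (u : ℕ → Bool) {n i : ℕ} (h : n ≤ i) : wIf u n i = true := by
  simp [wIf]; omega

lemma combine_run {u : ℕ → Bool} {n : ℕ} {r t : ℕ → Q}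
    (hr : C.FinRun (wIf u n) n r) (ht0 : t 0 = r n)
    (htd : ∀ i, C.delta (t i) true (t (i+1))) :
    ∃ rc : ℕ → Q, C.InfRun (wIf u n) rc ∧ (∀ i ≤ n, rc i = r i) ∧
      (∀ i, rc (n+i) = t i) := by
  refine ⟨fun i => if i < n then r i else t (i - n), ⟨?_, ?_⟩, ?_, ?_⟩
  · by_cases h : 0 < n
    · simpa [h] using hr.1
    · have hn : n = 0 := by omega
      subst hn
      simpa [ht0] using hr.1
  · intro i
    by_cases h : i + 1 ≤ n
    · have h1 : i < n := by omega
      by_cases h2 : i + 1 < n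
      · simpa [h1, h2] using hr.2 i h1
      · have h3 : i + 1 = n := by omega
        simp only [if_pos h1, if_neg (by omega : ¬ i+1 < n)]
        rw [show i+1-n = 0 from by omega, ht0, show r n = r (i+1) from by rw [h3]]
        exact hr.2 i h1
    · have h1 : ¬ i < n := by omega
      have h2 : ¬ i + 1 < n := by omega
      simp only [if_neg h1, if_neg h2]
      rw [wIf_ge u (by omega : n ≤ i), show i+1-n = (i-n)+1 from by omega]
      exact htd (i - n)
  · intro i hi
    by_cases h : i < n
    · simp [h]
    · have hin : i = n := by omega
      subst hin
      simp [ht0]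
  · intro i
    have h : ¬ n + i < n := by omega
    simp [h]

lemma inf_le_pref
    (hKd : ∀ q a q', C.delta q a q' → (K q a q' : ℚ) = C.disc q a q')
    (hK2 : ∀ q a q', 2 ≤ K q a q')
    (hWle : ∀ q a q', |(C.weight q a q' : ℝ)| ≤ Wr)
    (u : ℕ → Bool) (n : ℕ) {r : ℕ → Q} (hr : C.FinRun (wIf u n) n r) :
    C.infVal (wIf u n) ≤ C.runVal (wIf u n) r n +
      (Hfun C (r n)) *
        ∏ j ∈ Finset.range n, (1 / (C.disc (r j) (wIf u n j) (r (j+1)) : ℝ)) := by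
  set v := wIf u n with hv
  set P := ∏ j ∈ Finset.range n, (1 / (C.disc (r j) (v j) (r (j+1)) : ℝ)) with hP
  have hPpos : 0 < P := by
    rw [hP, prod_inv_disc C K hKd v r le_rfl hr.2]
    exact inv_pos.mpr (prod_K_pos K hK2 v r n)
  have key : ∀ x ∈ tailSet C (r n), C.infVal v ≤ C.runVal v r n + P * x := by
    rintro x ⟨t, ht0, htd, rfl⟩
    obtain ⟨rc, hrc, hrceq, hrctail⟩ := combine_run C hr ht0 htd
    have hbb : BddBelow {x | ∃ rr, C.InfRun v rr ∧ x = C.infRunVal v rr} := by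
      refine ⟨-(2*Wr), ?_⟩
      rintro y ⟨rr, hrr, rfl⟩
      exact (abs_le.mp (infRunVal_abs_le C K Wr hKd hK2 hWle v rr hrr.2)).1
    have h1 : C.infVal v ≤ C.infRunVal v rc := csInf_le hbb ⟨rc, hrc, rfl⟩
    have hsum := run_summable C K Wr hKd hK2 hWle v rc hrc.2
    rw [infRunVal_split C v rc hsum n] at h1
    have hrv : C.runVal v rc n = C.runVal v r n :=
      C.runVal_congr (fun _ _ => rfl) hrceq
    have hPr : ∏ j ∈ Finset.range n, (1 / (C.disc (rc j) (v j) (rc (j+1)) : ℝ)) = P := by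
      rw [hP]
      refine Finset.prod_congr rfl fun j hj => ?_
      simp only [Finset.mem_range] at hj
      rw [hrceq j (by omega), hrceq (j+1) (by omega)]
    have htail : (∑' i, ((C.weight (rc (n+i)) (v (n+i)) (rc (n+i+1)) : ℝ) *
        ∏ j ∈ Finset.range i, (1 / (C.disc (rc (n+j)) (v (n+j)) (rc (n+j+1)) : ℝ))))
        = C.infRunVal (fun _ => true) t := by
      unfold infRunVal
      apply tsum_congr
      intro i
      have hl : ∀ j : ℕ, v (n+j) = true := fun j => wIf_ge u (by omega)
      rw [hl i, hrctail i, show n+i+1 = n+(i+1) from rfl, hrctail (i+1)]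
      congr 1
      refine Finset.prod_congr rfl fun j hj => ?_
      rw [hl j, hrctail j, show n+j+1 = n+(j+1) from rfl, hrctail (j+1)]
    rw [hrv, hPr, htail] at h1
    exact h1
  have h2 : (C.infVal v - C.runVal v r n)/P ≤ Hfun C (r n) := by
    refine le_csInf (tailSet_nonempty C (r n)) (fun x hx => ?_)
    have h3 := key x hx
    rw [div_le_iff₀ hPpos]
    nlinarith
  have h4 := mul_le_mul_of_nonneg_left h2 (le_of_lt hPpos)
  rw [mul_div_assoc'] at h4
  rw [mul_comm P, mul_div_assoc, div_self (ne_of_gt hPpos), mul_one] at h4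
  nlinarith

lemma infVal_eq_minPref [Fintype Q]
    (hKd : ∀ q a q', C.delta q a q' → (K q a q' : ℚ) = C.disc q a q')
    (hK2 : ∀ q a q', 2 ≤ K q a q')
    (hWle : ∀ q a q', |(C.weight q a q' : ℝ)| ≤ Wr)
    (u : ℕ → Bool) (n : ℕ) :
    ∃ r : ℕ → Q, C.FinRun (wIf u n) n r ∧
      C.infVal (wIf u n) = C.runVal (wIf u n) r n +
        (Hfun C (r n)) *
          ∏ j ∈ Finset.range n, (1 / (C.disc (r j) (wIf u n j) (r (j+1)) : ℝ)) := by
  set v := wIf u n with hv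
  set S := {x : ℝ | ∃ r : ℕ → Q, C.FinRun v n r ∧
    x = C.runVal v r n + (Hfun C (r n)) *
      ∏ j ∈ Finset.range n, (1 / (C.disc (r j) (v j) (r (j+1)) : ℝ))} with hS
  have hSfin : S.Finite := by
    apply Set.Finite.subset (Set.finite_range
      (fun vv : Fin (n+1) → Q =>
        C.runVal v (fun i => vv ⟨min i n, by omega⟩) n +
          (Hfun C ((fun i => vv ⟨min i n, by omega⟩) n)) *
            ∏ j ∈ Finset.range n, (1 / (C.disc ((fun i => vv ⟨min i n, by omega⟩) j) (v j)
              ((fun i => vv ⟨min i n, by omega⟩) (j+1)) : ℝ))))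
    rintro x ⟨r, _, rfl⟩
    refine ⟨fun i => r i.val, ?_⟩
    have hagree : ∀ i ≤ n, (fun i => r (min i n)) i = r i :=
      fun i hi => by simp [Nat.min_eq_left hi]
    simp only
    rw [C.runVal_congr (fun _ _ => rfl) (fun i hi => (hagree i hi).symm)]
    congr 2
    · simp
    · refine Finset.prod_congr rfl fun j hj => ?_
      simp only [Finset.mem_range] at hj
      rw [show min j n = j from by omega, show min (j+1) n = j+1 from by omega]
  have hSne : S.Nonempty := ⟨_, C.someRun v, C.someRun_finRun v n, rfl⟩
  have hval_eq : C.infVal v = sInf S := by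
    apply le_antisymm
    · refine le_csInf hSne ?_
      rintro x ⟨r, hr, rfl⟩
      exact inf_le_pref C K Wr hKd hK2 hWle u n hr
    · refine le_csInf ⟨_, C.someRun v, C.someRun_infRun v, rfl⟩ ?_
      rintro y ⟨rr, hrr, rfl⟩
      have hsum := run_summable C K Wr hKd hK2 hWle v rr hrr.2
      rw [infRunVal_split C v rr hsum n]
      set t : ℕ → Q := fun i => rr (n+i) with htdef
      have hvl : ∀ j, n ≤ j → v j = true := fun j hj => by
        rw [hv]; exact wIf_ge u hj
      have htd : ∀ i, C.delta (t i) true (t (i+1)) := fun i => by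
        have h7 := hrr.2 (n+i)
        rw [hvl (n+i) (by omega)] at h7
        exact h7
      have htailmem : (∑' i, ((C.weight (rr (n+i)) (v (n+i)) (rr (n+i+1)) : ℝ) *
          ∏ j ∈ Finset.range i, (1 / (C.disc (rr (n+j)) (v (n+j)) (rr (n+j+1)) : ℝ))))
          ∈ tailSet C (rr n) := by
        refine ⟨t, by simp [htdef], htd, ?_⟩
        unfold infRunVal
        apply tsum_congr
        intro i
        rw [hvl (n+i) (by omega)]
        congr 1
        refine Finset.prod_congr rfl fun j hj => ?_
        rw [hvl (n+j) (by omega)]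
        rfl
      have h4 : Hfun C (rr n) ≤ _ := csInf_le (tailSet_bddBelow C K Wr hKd hK2 hWle (rr n))
        htailmem
      have hPnn : (0:ℝ) ≤ ∏ j ∈ Finset.range n, (1 / (C.disc (rr j) (v j) (rr (j+1)) : ℝ)) := by
        rw [prod_inv_disc C K hKd v rr le_rfl (fun j _ => hrr.2 j)]
        exact le_of_lt (inv_pos.mpr (prod_K_pos K hK2 v rr n))
      have hmem : C.runVal v rr n + (Hfun C (rr n)) *
          ∏ j ∈ Finset.range n, (1 / (C.disc (rr j) (v j) (rr (j+1)) : ℝ)) ∈ S :=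
        ⟨rr, ⟨hrr.1, fun i _ => hrr.2 i⟩, rfl⟩
      have h5 := csInf_le hSfin.bddBelow hmem
      have h6 := mul_le_mul_of_nonneg_left h4 hPnn
      nlinarith
  obtain ⟨r, hr, hx⟩ := hSne.csInf_mem hSfin
  exact ⟨r, hr, by rw [hval_eq, hx]⟩

lemma infCore [Fintype Q] (N : ℕ)
    (hN1 : 1 ≤ N) (hW1 : 1 ≤ Wr)
    (hNdvd : ∀ q a q', ((C.weight q a q').den : ℕ) ∣ N)
    (hWle : ∀ q a q', |(C.weight q a q' : ℝ)| ≤ Wr)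
    (hKd : ∀ q a q', C.delta q a q' → (K q a q' : ℚ) = C.disc q a q')
    (hK2 : ∀ q a q', 2 ≤ K q a q')
    (u : ℕ → Bool) (n : ℕ)
    (hv1 : C.infVal (wIf u (n+1)) = -((3:ℝ)^n)⁻¹)
    (hv2 : ((2:ℝ)^(n+1))⁻¹ + C.infVal (wIf u (n+1)) ≤ C.infVal (wIf u (n+2))) :
    ∃ (q : Q) (x : ℝ), 0 < x ∧ x * 3^n ≤ (N:ℝ) * (5*Wr) * 2^(n+1) ∧
      ∃ z : ℤ, (N:ℝ) * Hfun C q + x = (z:ℝ) := by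
  set v := wIf u (n+1) with hvdef
  obtain ⟨r, hr, hiv⟩ := infVal_eq_minPref C K Wr hKd hK2 hWle u (n+1)
  set Dr : ℝ := ∏ j ∈ Finset.range (n+1), ((K (r j) (v j) (r (j+1)) : ℤ) : ℝ) with hDr
  have hDpos : 0 < Dr := prod_K_pos K hK2 v r (n+1)
  have hDge : (2:ℝ)^(n+1) ≤ Dr := by
    rw [hDr]
    have := prod_K_ge K hK2 v r (n+1)
    exact_mod_cast this
  have hprodD : ∏ j ∈ Finset.range (n+1), (1 / (C.disc (r j) (v j) (r (j+1)) : ℝ)) = Dr⁻¹ :=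
    prod_inv_disc C K hKd v r le_rfl hr.2
  obtain ⟨m, hm⟩ := key_int_run C N hNdvd K hKd hK2 v r (n+1) hr.2
  set q : Q := r (n+1) with hq
  set x : ℝ := (N:ℝ) * Dr * ((3:ℝ)^n)⁻¹ with hx
  have h3p : (0:ℝ) < 3^n := by positivity
  have hNpos : (0:ℝ) < (N:ℝ) := by exact_mod_cast hN1
  have hxpos : 0 < x := by rw [hx]; positivity
  -- the integer relation
  have hrel : ∃ z : ℤ, (N:ℝ) * Hfun C q + x = (z:ℝ) := by
    refine ⟨-m, ?_⟩
    have he : -((3:ℝ)^n)⁻¹ = C.runVal v r (n+1) + Hfun C q * Dr⁻¹ := by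
      rw [← hv1, hiv, hprodD]
    have he2 := congrArg (fun y : ℝ => (N:ℝ) * Dr * y) he
    have hDne : Dr ≠ 0 := ne_of_gt hDpos
    have he3 : (N:ℝ) * Dr * (C.runVal v r (n+1) + Hfun C q * Dr⁻¹)
        = (m:ℝ) + (N:ℝ) * Hfun C q := by
      rw [mul_add, hm]
      field_simp
    rw [he3] at he2
    have : -x = (m:ℝ) + (N:ℝ) * Hfun C q := by rw [hx]; rw [← he2]; ring
    push_cast
    linarith
  -- the upper bound on Dr
  have hHb := fun qq => Hfun_bounds C K Wr hKd hK2 hWle qq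
  have hWnn : (0:ℝ) ≤ Wr := by linarith
  set v' := wIf u (n+2) with hv'def
  have hww : ∀ i < n+1, v i = v' i := by
    intro i hi
    simp only [hvdef, hv'def, wIf]
    rw [if_pos hi, if_pos (by omega)]
  set q'' := (C.complete (r (n+1)) (v' (n+1))).choose with hq''
  have hq''spec := (C.complete (r (n+1)) (v' (n+1))).choose_spec
  set r' : ℕ → Q := fun i => if i ≤ n+1 then r i else q'' with hr'def
  have hrr' : ∀ i ≤ n+1, r' i = r i := fun i hi => by simp [hr'def, hi]
  have hrun' : C.FinRun v' (n+2) r' := by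
    constructor
    · rw [hrr' 0 (by omega)]; exact hr.1
    · intro i hi
      rcases Nat.lt_or_ge i (n+1) with h|h
      · rw [hrr' i (by omega), hrr' (i+1) (by omega), ← hww i h]
        exact hr.2 i h
      · have hie : i = n+1 := by omega
        subst hie
        rw [hrr' (n+1) le_rfl, show r' (n+1+1) = q'' from by simp [hr'def]]
        exact hq''spec
  have hup := inf_le_pref C K Wr hKd hK2 hWle u (n+2) hrun'
  -- rewrite the pieces of hup
  have hP' : ∏ j ∈ Finset.range (n+2), (1 / (C.disc (r' j) (v' j) (r' (j+1)) : ℝ))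
      = Dr⁻¹ * (1 / (C.disc (r (n+1)) (v' (n+1)) q'' : ℝ)) := by
    rw [Finset.prod_range_succ]
    congr 1
    · rw [← hprodD]
      refine Finset.prod_congr rfl fun j hj => ?_
      simp only [Finset.mem_range] at hj
      rw [hrr' j (by omega), hrr' (j+1) (by omega), hww j hj]
    · rw [hrr' (n+1) le_rfl, show r' (n+1+1) = q'' from by simp [hr'def]]
  have hrv' : C.runVal v' r' (n+2) = C.runVal v r (n+1) +
      (C.weight (r (n+1)) (v' (n+1)) q'' : ℝ) * Dr⁻¹ := by
    rw [runVal_succ]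
    congr 1
    · rw [C.runVal_congr (fun i hi => (hww i hi).symm) hrr']
    · rw [hrr' (n+1) le_rfl, show r' (n+1+1) = q'' from by simp [hr'def]]
      congr 1
      rw [← hprodD]
      refine Finset.prod_congr rfl fun j hj => ?_
      simp only [Finset.mem_range] at hj
      rw [hrr' j (by omega), hrr' (j+1) (by omega), hww j hj]
  -- invd bounds
  have hinvd : 0 < (1 / (C.disc (r (n+1)) (v' (n+1)) q'' : ℝ)) ∧
      (1 / (C.disc (r (n+1)) (v' (n+1)) q'' : ℝ)) ≤ 1 := by
    have hk := hKd _ _ _ hq''spec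
    have hk2 := hK2 (r (n+1)) (v' (n+1)) q''
    have : (2:ℝ) ≤ (C.disc (r (n+1)) (v' (n+1)) q'' : ℝ) := by
      rw [← hk]
      exact_mod_cast hk2
    constructor
    · positivity
    · rw [div_le_one (by linarith)]; linarith
  have hDle : Dr ≤ (5*Wr) * 2^(n+1) := by
    rw [hP', hrv', show r' (n+2) = q'' from by simp [hr'def]] at hup
    have hγ : (C.weight (r (n+1)) (v' (n+1)) q'' : ℝ) ≤ Wr :=
      le_trans (le_abs_self _) (hWle _ _ _)
    have hDinv : (0:ℝ) < Dr⁻¹ := inv_pos.mpr hDpos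
    have b1 : Hfun C q'' * (1 / (C.disc (r (n+1)) (v' (n+1)) q'' : ℝ)) ≤ 2*Wr := by
      rcases le_or_gt 0 (Hfun C q'') with h|h
      · calc Hfun C q'' * (1 / (C.disc (r (n+1)) (v' (n+1)) q'' : ℝ))
            ≤ Hfun C q'' * 1 := mul_le_mul_of_nonneg_left hinvd.2 h
          _ = Hfun C q'' := mul_one _
          _ ≤ 2*Wr := (hHb q'').2
      · have := mul_neg_of_neg_of_pos h hinvd.1
        linarith
    have he : -((3:ℝ)^n)⁻¹ = C.runVal v r (n+1) + Hfun C q * Dr⁻¹ := by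
      rw [← hv1, hiv, hprodD]
    have hs : (C.weight (r (n+1)) (v' (n+1)) q'' : ℝ) +
        Hfun C q'' * (1 / (C.disc (r (n+1)) (v' (n+1)) q'' : ℝ)) - Hfun C q ≤ 5*Wr := by
      have := (hHb q).1
      linarith
    have hs2 := mul_le_mul_of_nonneg_right hs (le_of_lt hDinv)
    have key2 : ((2:ℝ)^(n+1))⁻¹ ≤ 5*Wr*Dr⁻¹ := by nlinarith [hv2, hv1, he, hup, hs2]
    have h2p : (0:ℝ) < 2^(n+1) := by positivity
    calc Dr = Dr * (((2:ℝ)^(n+1))⁻¹ * 2^(n+1)) := by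
          rw [inv_mul_cancel₀ (ne_of_gt h2p), mul_one]
      _ ≤ Dr * ((5*Wr * Dr⁻¹) * 2^(n+1)) :=
          mul_le_mul_of_nonneg_left
            (mul_le_mul_of_nonneg_right key2 (le_of_lt h2p)) (le_of_lt hDpos)
      _ = 5*Wr * 2^(n+1) * (Dr * Dr⁻¹) := by ring
      _ = 5*Wr * 2^(n+1) := by rw [mul_inv_cancel₀ (ne_of_gt hDpos), mul_one]
  refine ⟨q, x, hxpos, ?_, hrel⟩
  have hx3 : x * 3^n = (N:ℝ) * Dr := by
    rw [hx]
    field_simp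
  rw [hx3]
  have := mul_le_mul_of_nonneg_left hDle (Nat.cast_nonneg (α := ℝ) N)
  linarith

end InfPart

lemma infKey {Q : Type} [Fintype Q] (C : NMDA Bool Q) (hInt : C.Integral) (u : ℕ → Bool)
    (hval : ∀ k : ℕ, ∃ n, k ≤ n ∧
      C.infVal (wIf u (n+1)) = -((3:ℝ)^n)⁻¹ ∧
      ((2:ℝ)^(n+1))⁻¹ + C.infVal (wIf u (n+1)) ≤ C.infVal (wIf u (n+2))) : False := by
  obtain ⟨N, Wr, K, hN1, hW1, hNdvd, hWle, hKd, hK2⟩ := exists_NWK C hInt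
  obtain ⟨qdef, _⟩ := C.init_nonempty
  -- the ε-claim
  have CL : ∀ ε : ℝ, ∃ p : Q × ℝ, 0 < ε →
      (0 < p.2 ∧ p.2 < ε ∧ p.2 < 1 ∧ ∃ z : ℤ, (N:ℝ) * Hfun C p.1 + p.2 = (z:ℝ)) := by
    intro ε
    by_cases hε : 0 < ε
    · set ε' : ℝ := min ε 1 with hε'def
      have hε' : 0 < ε' := lt_min hε one_pos
      obtain ⟨k, hk⟩ := growth_bound ((2 * ((N:ℝ) * (5*Wr))) / ε')
      obtain ⟨n, hn, hv1, hv2⟩ := hval k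
      obtain ⟨q, x, hx, hxb, z, hz⟩ :=
        infCore C K Wr N hN1 hW1 hNdvd hWle hKd hK2 u n hv1 hv2
      refine ⟨(q, x), fun _ => ⟨hx, ?_, ?_, z, hz⟩⟩
      · -- x < ε
        have h1 := hk n hn
        have h3p : (0:ℝ) < 3^n := by positivity
        rw [div_mul_eq_mul_div, div_lt_iff₀ hε'] at h1
        -- h1 : 2 * (N*(5Wr)) * 2^n < 3^n * ε'
        have h2 : (N:ℝ) * (5*Wr) * 2^(n+1) = 2 * ((N:ℝ)*(5*Wr)) * 2^n := by
          rw [pow_succ]; ring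
        have h4 : x * 3^n < 3^n * ε' := by
          calc x * 3^n ≤ (N:ℝ) * (5*Wr) * 2^(n+1) := hxb
            _ = 2 * ((N:ℝ)*(5*Wr)) * 2^n := h2
            _ < 3^n * ε' := h1
        have h5 : x < ε' := by nlinarith
        exact lt_of_lt_of_le h5 (min_le_left _ _)
      · -- x < 1 (same computation)
        have h1 := hk n hn
        have h3p : (0:ℝ) < 3^n := by positivity
        rw [div_mul_eq_mul_div, div_lt_iff₀ hε'] at h1
        have h2 : (N:ℝ) * (5*Wr) * 2^(n+1) = 2 * ((N:ℝ)*(5*Wr)) * 2^n := by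
          rw [pow_succ]; ring
        have h4 : x * 3^n < 3^n * ε' := by
          calc x * 3^n ≤ (N:ℝ) * (5*Wr) * 2^(n+1) := hxb
            _ = 2 * ((N:ℝ)*(5*Wr)) * 2^n := h2
            _ < 3^n * ε' := h1
        have h5 : x < ε' := by nlinarith
        exact lt_of_lt_of_le h5 (min_le_right _ _)
    · exact ⟨(qdef, 0), fun h => absurd h hε⟩
  choose F hF using CL
  set g : ℕ → Q × ℝ := fun n => Nat.rec (F 1) (fun _ p => F p.2) n with hg
  have hg0 : g 0 = F 1 := rfl
  have hgs : ∀ n, g (n+1) = F (g n).2 := fun n => rfl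
  have hinv : ∀ n, 0 < (g n).2 ∧ (g n).2 < 1 ∧
      ∃ z : ℤ, (N:ℝ) * Hfun C (g n).1 + (g n).2 = (z:ℝ) := by
    intro n
    induction n with
    | zero =>
        have := hF 1 one_pos
        exact ⟨this.1, this.2.2.1, this.2.2.2⟩
    | succ k ih =>
        have := hF (g k).2 ih.1
        rw [← hgs k] at this
        exact ⟨this.1, this.2.2.1, this.2.2.2⟩
  have hdec : ∀ n, (g (n+1)).2 < (g n).2 := by
    intro n
    have := hF (g n).2 (hinv n).1
    rw [← hgs n] at this
    exact this.2.1
  have hanti : StrictAnti (fun n => (g n).2) := strictAnti_nat_of_succ_lt hdec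
  obtain ⟨i, j, hij, hqe⟩ := Finite.exists_ne_map_eq_of_infinite (fun n => (g n).1)
  -- wlog i < j
  rcases hij.lt_or_gt with hlt|hlt
  all_goals {
    obtain ⟨zi, hzi⟩ := (hinv i).2.2
    obtain ⟨zj, hzj⟩ := (hinv j).2.2
    have hHe : Hfun C (g i).1 = Hfun C (g j).1 := by rw [hqe]
    have hdiff : (g i).2 - (g j).2 = (zi:ℝ) - (zj:ℝ) := by
      rw [hHe] at hzi
      linarith
    have hi1 := (hinv i).1
    have hj1 := (hinv j).1
    have hi2 := (hinv i).2.1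
    have hj2 := (hinv j).2.1
    first
    | · -- i < j : x_j < x_i
        have hx := hanti hlt
        simp only at hx
        have h1 : (0:ℝ) < (zi:ℝ) - (zj:ℝ) := by linarith
        have h2 : (zi:ℝ) - (zj:ℝ) < 1 := by linarith
        have h3 : (0:ℤ) < zi - zj := by exact_mod_cast h1
        have h4 : zi - zj < 1 := by exact_mod_cast h2
        omega
    | · have hx := hanti hlt
        simp only at hx
        have h1 : (0:ℝ) < (zj:ℝ) - (zi:ℝ) := by linarith
        have h2 : (zj:ℝ) - (zi:ℝ) < 1 := by linarith
        have h3 : (0:ℤ) < zj - zi := by exact_mod_cast h1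
        have h4 : zj - zi < 1 := by exact_mod_cast h2
        omega
  }

lemma wIf_max (n : ℕ) : wIf (fun _ => false) n = wMaxI n := by
  funext i
  simp only [wIf, wMaxI]
  by_cases h : i < n
  · rw [if_pos h]
    symm
    rw [decide_eq_false_iff_not]
    omega
  · rw [if_neg h]
    symm
    rw [decide_eq_true_eq]
    omega

lemma wIf_sum (n : ℕ) : wIf wSum n = wSumI n := by
  funext i
  simp only [wIf, wSumI, wSum]
  by_cases h : i < n
  · rw [if_pos h, decide_eq_decide]
    omega
  · rw [if_neg h]
    symm
    rw [decide_eq_true_eq]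
    omega

lemma max_inf_assemble {Q : Type} [Fintype Q] (C : NMDA Bool Q) (hInt : C.Integral)
    (hEq : ∀ w : ℕ → Bool, C.infVal w = max (AutA.infVal w) (AutB.infVal w)) : False := by
  apply infKey C hInt (fun _ => false)
  intro k
  refine ⟨2*k+1, by omega, ?_, ?_⟩
  · rw [wIf_max, hEq, show 2*k+1+1 = 2*k+2 from by ring, AutA_infVal_max, AutB_infVal_max,
      Afin_max_even, Bfin_max_even, pw31,
      max_eq_right (by nlinarith [hle94 k, h9pos k, h4pos k] :
        -((4:ℝ)⁻¹)^k/2 ≤ -((9:ℝ)⁻¹)^k/3)]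
    ring
  · rw [wIf_max, wIf_max, hEq, hEq, show 2*k+1+1 = 2*k+2 from by ring,
      show 2*k+1+2 = 2*(k+1)+1 from by ring,
      AutA_infVal_max, AutB_infVal_max, AutA_infVal_max, AutB_infVal_max,
      Afin_max_even, Bfin_max_even, Afin_max_odd, Bfin_max_odd,
      max_eq_right (by nlinarith [hle94 k, h9pos k, h4pos k] :
        -((4:ℝ)⁻¹)^k/2 ≤ -((9:ℝ)⁻¹)^k/3),
      max_eq_left (hle94 (k+1)),
      show (2:ℝ)^(2*k+1+1) = 2^(2*k+2) from by norm_num, pw21]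
    nlinarith [h9pos k]

lemma sum_inf_assemble {Q : Type} [Fintype Q] (C : NMDA Bool Q) (hInt : C.Integral)
    (hEq : ∀ w : ℕ → Bool, C.infVal w = AutA.infVal w + AutB.infVal w) : False := by
  apply infKey C hInt wSum
  intro k
  refine ⟨2*k+2, by omega, ?_, ?_⟩
  · rw [wIf_sum, hEq, show 2*k+2+1 = 2*k+3 from by ring, AutA_infVal_sum, AutB_infVal_sum,
      show 2*k+3 = 2*(k+1)+1 from by ring, Afin_sum_odd,
      show 2*(k+1)+1 = 2*k+3 from by ring, Bfin_sum_odd, pw32]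
    ring
  · rw [wIf_sum, wIf_sum, hEq, hEq, show 2*k+2+1 = 2*k+3 from by ring,
      show 2*k+2+2 = 2*k+4 from by ring,
      AutA_infVal_sum, AutB_infVal_sum, AutA_infVal_sum, AutB_infVal_sum,
      show 2*k+3 = 2*(k+1)+1 from by ring, Afin_sum_odd,
      show 2*(k+1)+1 = 2*k+3 from by ring, Bfin_sum_odd,
      show 2*k+4 = 2*(k+1)+2 from by ring, Afin_sum_even, Bfin_sum_even,
      show (2:ℝ)^(2*k+2+1) = 2^(2*k+3) from by norm_num, pw22]
    nlinarith [h9pos (k+1)]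

/-- There exist deterministic integral NDAs `A` (with discount factor 2) and `B`
(with discount factor 3) over the same alphabet such that no integral NMDA computes
`max(A, B)` and no integral NMDA computes `A + B`, with respect to nonempty finite
words as well as with respect to infinite words. -/
theorem integral_nmdas_not_closed_under_max_and_add :
    ∃ (α : Type) (_ : Fintype α) (QA QB : Type) (_ : Fintype QA) (_ : Fintype QB)
      (A : NMDA α QA) (B : NMDA α QB),
      A.Deterministic ∧ B.Deterministic ∧ A.ConstDisc 2 ∧ B.ConstDisc 3 ∧
        ∀ (QC : Type) (_ : Fintype QC) (C : NMDA α QC), C.Integral →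
          (¬ ∀ (w : ℕ → α) (n : ℕ), 0 < n →
              C.finVal w n = max (A.finVal w n) (B.finVal w n)) ∧
          (¬ ∀ (w : ℕ → α) (n : ℕ), 0 < n →
              C.finVal w n = A.finVal w n + B.finVal w n) ∧
          (¬ ∀ w : ℕ → α, C.infVal w = max (A.infVal w) (B.infVal w)) ∧
          (¬ ∀ w : ℕ → α, C.infVal w = A.infVal w + B.infVal w) := by
  refine ⟨Bool, inferInstance, StA, StB, inferInstance, inferInstance, AutA, AutB,
    ofFun_deterministic, ofFun_deterministic, ofFun_constDisc, ofFun_constDisc, ?_⟩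
  intro QC _ C hInt
  exact ⟨fun h => max_fin_assemble C hInt h, fun h => sum_fin_assemble C hInt h,
    fun h => max_inf_assemble C hInt h, fun h => sum_inf_assemble C hInt h⟩
end

section
/- For every function θ : Σ⁺ → ℕ∖{0,1} over a finite alphabet Σ, θ is a choice function (i.e., there exists a θ-NMDA) if and only if there exists a finite transducer (Mealy machine) T with output alphabet ℕ∖{0,1} such that T(u) = θ(u) for every nonempty finite word u. -/
/-- A transducer (Mealy machine) with input alphabet `α`, states `P`, and output
alphabet the natural numbers. -/
structure Mealy (α : Type) (P : Type) where
  start : P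
  step : P → α → P
  out : P → α → ℕ

/-- The state reached by the Mealy machine `M` after reading the finite word `u`. -/
def Mealy.st {α P : Type} (M : Mealy α P) (u : List α) : P :=
  u.foldl M.step M.start

lemma Mealy.st_concat {α P : Type} (M : Mealy α P) (u : List α) (a : α) :
    M.st (u ++ [a]) = M.step (M.st u) a := by
  simp [Mealy.st]

lemma ofFn_succ_concat {α : Type} (w : ℕ → α) (n : ℕ) :
    (List.ofFn fun i : Fin (n + 1) => w i.val) =
      (List.ofFn fun i : Fin n => w i.val) ++ [w n] := by
  rw [List.ofFn_succ']
  simp [List.concat_eq_append]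

/-- A function `θ : Σ⁺ → ℕ∖{0,1}` is a choice function (i.e., some `θ`-NMDA exists)
if and only if it is computed by a finite transducer (Mealy machine) with output
alphabet `ℕ∖{0,1}`: the output of the transducer on the last transition taken when
reading a nonempty word `u ++ [a]` equals `θ (u ++ [a])`. -/
theorem choice_function_iff_transducer {α : Type} [Fintype α] (θ : List α → ℕ)
    (hθ : ∀ (u : List α) (a : α), 2 ≤ θ (u ++ [a])) :
    (∃ (Q : Type) (_ : Fintype Q) (A : NMDA α Q), A.ThetaNMDA θ) ↔
      ∃ (P : Type) (_ : Fintype P) (M : Mealy α P),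
        (∀ p a, 2 ≤ M.out p a) ∧
          ∀ (u : List α) (a : α), θ (u ++ [a]) = M.out (M.st u) a := by
  classical
  constructor
  · rintro ⟨Q, hQ, A, hInt, hTidy⟩
    refine ⟨Q, hQ, ?_⟩
    obtain ⟨q0, hq0⟩ := A.init_nonempty
    let step : Q → α → Q := fun q a => (A.complete q a).choose
    have hstep : ∀ q a, A.delta q a (step q a) := fun q a => (A.complete q a).choose_spec
    refine ⟨⟨q0, step, fun q a => max 2 (A.disc q a (step q a)).num.toNat⟩,
      fun p a => le_max_left _ _, ?_⟩
    intro u a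
    set v : List α := u ++ [a] with hv
    have hvlen : v.length = u.length + 1 := by simp [hv]
    set n := u.length with hn
    let w : ℕ → α := fun i => v.getD i a
    let r : ℕ → Q := fun i => (v.take i).foldl step q0
    have hr0 : r 0 = q0 := rfl
    have hrsucc : ∀ i < n + 1, r (i + 1) = step (r i) (w i) := by
      intro i hi
      have hiv : i < v.length := by omega
      have htake : v.take (i + 1) = v.take i ++ [v[i]] := by
        rw [List.take_succ]
        simp [List.getElem?_eq_getElem hiv]
      show (v.take (i + 1)).foldl step q0 = _
      rw [htake, List.foldl_append]
      simp [w, r, List.getD, List.getElem?_eq_getElem hiv]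
    have hrun : A.FinRun w (n + 1) r := by
      constructor
      · rw [hr0]; exact hq0
      · intro i hi
        rw [hrsucc i hi]
        exact hstep _ _
    have hdisc := hTidy w n r hrun
    have hofn : (List.ofFn fun i : Fin (n + 1) => w i.val) = v := by
      apply List.ext_getElem
      · simp [hvlen]
      · intro i h1 h2
        simp only [List.getElem_ofFn]
        simp [w, List.getD, List.getElem?_eq_getElem h2]
    rw [hofn] at hdisc
    have hrn : r n = (v.take n).foldl step q0 := rfl
    have htaken : v.take n = u := by
      rw [hv, hn]; exact List.take_left
    have hwn : w n = a := by
      have : n < v.length := by omega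
      simp only [w, List.getD, List.getElem?_eq_getElem this]
      simp [hv, hn]
    have hrnst : r n = u.foldl step q0 := by rw [hrn, htaken]
    rw [hrnst, hwn] at hdisc
    have hrn1 : r (n + 1) = step (u.foldl step q0) a := by
      rw [hrsucc n (by omega), hrnst, hwn]
    rw [hrn1] at hdisc
    show θ (u ++ [a]) = max 2 (A.disc (Mealy.st _ u) a (step (Mealy.st _ u) a)).num.toNat
    have hst : (Mealy.st (⟨q0, step, fun q a => max 2 (A.disc q a (step q a)).num.toNat⟩ : Mealy α Q) u) = u.foldl step q0 := rfl
    rw [hst, hdisc]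
    have : ((θ (u ++ [a]) : ℚ)).num.toNat = θ (u ++ [a]) := by
      simp
    rw [this]
    exact (max_eq_right (hθ u a)).symm
  · rintro ⟨P, hP, M, hout, hθM⟩
    refine ⟨P, hP, ?_⟩
    refine ⟨⟨{M.start}, ⟨M.start, rfl⟩, fun q a q' => q' = M.step q a,
      fun q a => ⟨M.step q a, rfl⟩, fun _ _ _ => 0, fun q a _ => (M.out q a : ℚ), ?_⟩, ?_, ?_⟩
    · intro q a q' _
      have h := hout q a
      show (1 : ℚ) < (M.out q a : ℚ)
      exact_mod_cast lt_of_lt_of_le one_lt_two h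
    · intro q a q' _
      exact ⟨(M.out q a : ℤ), by push_cast; ring⟩
    · intro w n r hrun
      obtain ⟨hinit, hdelta⟩ := hrun
      have h0 : r 0 = M.start := hinit
      have key : ∀ i, i ≤ n + 1 → r i = M.st (List.ofFn fun j : Fin i => w j.val) := by
        intro i
        induction i with
        | zero => intro _; simpa [Mealy.st] using h0
        | succ i ih =>
          intro hi
          have hri : r i = M.st (List.ofFn fun j : Fin i => w j.val) := ih (by omega)
          have hstep : r (i + 1) = M.step (r i) (w i) := hdelta i (by omega)
          rw [hstep, hri, ofFn_succ_concat, Mealy.st_concat]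
      have hrn := key n (by omega)
      show (M.out (r n) (w n) : ℚ) = _
      rw [ofFn_succ_concat, hθM (List.ofFn fun j : Fin n => w j.val) (w n), hrn]
end
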